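/- arXiv:2104.14651 — 9 statements merged into one kernel-verified Lean document; each statement's English description precedes it below -/
import Mathlib

section
/- Let R be a commutative ring of characteristic p > 0, let q = p^e be a power of p, and let D : R → R be a differential operator of order at most q − 1 (i.e., the left R-linear extension of D to R ⊗ R annihilates T_R^q, where T_R is the ideal generated by 1⊗r − r⊗1). Then D is R^q-linear: D(x^q · r) = x^q · D(r) for all x, r ∈ R. -/
/-- `IsDiffOp R n D` : `D` is an (absolute) differential operator of `R` of order at most `n`,
defined inductively: order `≤ 0` means `R`-linear, and `D` has order `≤ n+1` if all the
commutators `[D, mulLeft r]` have order `≤ n`.  (For commutative rings this agrees with the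
definition via the left `R`-linear extension of `D` to `R ⊗ R` annihilating `T_R^{n+1}`.) -/
def IsDiffOp (R : Type*) [CommRing R] : ℕ → (R →+ R) → Prop
  | 0, D => ∀ r s : R, D (r * s) = r * D s
  | n + 1, D => ∀ r : R,
      IsDiffOp R n ((D.comp (AddMonoidHom.mulLeft r)) - ((AddMonoidHom.mulLeft r).comp D))

section Aux

variable {R : Type*} [CommRing R]

/-- Left composition with multiplication by `x`, as an additive endomorphism of `R →+ R`. -/
private def lamE (x : R) : AddMonoid.End (R →+ R) :=
  AddMonoidHom.mk' (fun F => (AddMonoidHom.mulLeft x).comp F) (by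
    intro F G; ext r; simp [mul_add])

/-- Right composition with multiplication by `x`, as an additive endomorphism of `R →+ R`. -/
private def rhoE (x : R) : AddMonoid.End (R →+ R) :=
  AddMonoidHom.mk' (fun F => F.comp (AddMonoidHom.mulLeft x)) (by
    intro F G; ext r; simp)

private lemma lamE_apply (x : R) (F : R →+ R) (r : R) : lamE x F r = x * F r := rfl

private lemma rhoE_apply (x : R) (F : R →+ R) (r : R) : rhoE x F r = F (x * r) := rfl

private lemma lamE_pow_apply (x : R) (n : ℕ) (F : R →+ R) (r : R) :
    ((lamE x ^ n) F) r = x ^ n * F r := by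
  induction n with
  | zero => simp [AddMonoid.End.one_apply]
  | succ n ih =>
      rw [pow_succ']
      show (lamE x ((lamE x ^ n) F)) r = _
      rw [lamE_apply, ih, pow_succ', mul_assoc]

private lemma rhoE_pow_apply (x : R) (n : ℕ) (F : R →+ R) (r : R) :
    ((rhoE x ^ n) F) r = F (x ^ n * r) := by
  induction n generalizing F r with
  | zero => simp [AddMonoid.End.one_apply]
  | succ n ih =>
      rw [pow_succ]
      show ((rhoE x ^ n) (rhoE x F)) r = _
      rw [ih, rhoE_apply, pow_succ, mul_comm (x ^ n) x, mul_assoc]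

private lemma commute_lamE (x : R) : Commute (lamE x) (rhoE x - lamE x) := by
  have h : Commute (lamE x) (rhoE x) := by
    show lamE x * rhoE x = rhoE x * lamE x
    refine AddMonoidHom.ext fun F => AddMonoidHom.ext fun r => ?_
    show (lamE x (rhoE x F)) r = (rhoE x (lamE x F)) r
    simp [lamE_apply, rhoE_apply]
  exact h.sub_right (Commute.refl _)

private lemma deltaE_apply (x : R) (D : R →+ R) :
    (rhoE x - lamE x) D = D.comp (AddMonoidHom.mulLeft x) - (AddMonoidHom.mulLeft x).comp D := by
  rfl

private lemma deltaE_pow_eq_zero (x : R) (n : ℕ) (D : R →+ R) (hD : IsDiffOp R n D) :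
    ((rhoE x - lamE x) ^ (n + 1)) D = 0 := by
  induction n generalizing D with
  | zero =>
      refine AddMonoidHom.ext fun r => ?_
      show D (x * r) - x * D r = 0
      rw [hD x r, sub_self]
  | succ n ih =>
      have h := hD x
      rw [← deltaE_apply] at h
      have h2 := ih _ h
      rw [pow_succ]
      show ((rhoE x - lamE x) ^ (n + 1)) ((rhoE x - lamE x) D) = 0
      exact h2

private lemma addHom_sum_apply {ι : Type*} (s : Finset ι) (f : ι → (R →+ R)) (r : R) :
    (∑ i ∈ s, f i) r = ∑ i ∈ s, f i r := by
  induction s using Finset.cons_induction with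
  | empty => simp
  | cons a s ha ih => simp [Finset.sum_cons, ih]

private lemma endSum_apply {ι : Type*} (s : Finset ι) (f : ι → AddMonoid.End (R →+ R))
    (D : R →+ R) : (∑ i ∈ s, f i) D = ∑ i ∈ s, f i D := by
  induction s using Finset.cons_induction with
  | empty => rfl
  | cons a s ha ih =>
      rw [Finset.sum_cons, Finset.sum_cons, ← ih]
      rfl

end Aux

/-- A differential operator of order at most `q - 1` on a ring of characteristic `p > 0`
(`q = p ^ e`) is `R^q`-linear. -/
theorem diffOp_order_lt_q_is_pow_q_linear
    (R : Type*) [CommRing R] (p : ℕ) [Fact p.Prime] [CharP R p]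
    (e q : ℕ) (hq : q = p ^ e) (D : R →+ R) (hD : IsDiffOp R (q - 1) D)
    (x r : R) : D (x ^ q * r) = x ^ q * D r := by
  have hp : p.Prime := Fact.out
  have hq0 : 0 < q := hq ▸ pow_pos hp.pos e
  have hq1 : q - 1 + 1 = q := Nat.succ_pred_eq_of_pos hq0
  have hzero : ((rhoE x - lamE x) ^ q) D = 0 := by
    rw [← hq1]; exact deltaE_pow_eq_zero x (q - 1) D hD
  have key : D (x ^ q * r) = ((rhoE x ^ q) D) r := (rhoE_pow_apply x q D r).symm
  rw [key]
  have hsplit : rhoE x = lamE x + (rhoE x - lamE x) := by abel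
  rw [hsplit, (commute_lamE x).add_pow]
  rw [endSum_apply, addHom_sum_apply]
  rw [Finset.sum_range_succ]
  have hlast : ((lamE x ^ q * (rhoE x - lamE x) ^ (q - q) * (q.choose q : AddMonoid.End (R →+ R))) D) r
      = x ^ q * D r := by
    simp only [Nat.sub_self, pow_zero, mul_one, Nat.choose_self, Nat.cast_one]
    exact lamE_pow_apply x q D r
  rw [hlast]
  have hmid : ∀ k ∈ Finset.range q,
      ((lamE x ^ k * (rhoE x - lamE x) ^ (q - k) * (q.choose k : AddMonoid.End (R →+ R))) D) r
        = 0 := by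
    intro k hk
    rw [Finset.mem_range] at hk
    show ((lamE x ^ k) (((rhoE x - lamE x) ^ (q - k))
        ((q.choose k : AddMonoid.End (R →+ R)) D))) r = 0
    rw [AddMonoid.End.natCast_apply, map_nsmul, map_nsmul]
    have hev : ((q.choose k • ((lamE x ^ k) (((rhoE x - lamE x) ^ (q - k)) D))) : R →+ R) r
        = q.choose k • (((lamE x ^ k) (((rhoE x - lamE x) ^ (q - k)) D)) r) :=
      map_nsmul (AddMonoidHom.eval r) _ _
    rw [hev]
    rcases eq_or_ne k 0 with rfl | hk0
    · rw [Nat.sub_zero, hzero]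
      simp
    · have hdvd : p ∣ q.choose k := by
        rw [hq]
        exact Nat.Prime.dvd_choose_pow hp hk0 (by omega)
      rw [nsmul_eq_mul, (CharP.cast_eq_zero_iff R p _).mpr hdvd, zero_mul]
  rw [Finset.sum_eq_zero hmid, zero_add]
end

section
/- Let R be a commutative ring of characteristic p > 0 and q = p^e. If D : R → R is a differential operator of order at most q − 1 with D(1) = 0, then D vanishes on R^q, i.e., D(x^q) = 0 for all x ∈ R. -/
open LinearMap

theorem LinearMap.mulLeft_sub_mulRight_pow_expChar_pow {A : Type*} [Ring A] (p : ℕ) [ExpChar A p]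
    (a : A) (n : ℕ) :
    (mulLeft ℤ a - mulRight ℤ a) ^ p ^ n = mulLeft ℤ (a ^ p ^ n) - mulRight ℤ (a ^ p ^ n) := by
  have : ExpChar (Module.End ℤ A) p := expChar_of_injective_ringHom Algebra.lmul_injective p
  rw [sub_pow_expChar_pow_of_commute p n (commute_mulLeft_right a a), pow_mulLeft, pow_mulRight]

instance AddMonoid.End.expChar {R : Type*} [Ring R] (p : ℕ) [ExpChar R p] :
    ExpChar (AddMonoid.End R) p :=
  expChar_of_injective_ringHom (f := Module.toAddMonoidEnd R R) (fun r s h => by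
    have h1 : r • (1 : R) = s • 1 := DFunLike.congr_fun h 1
    simpa using h1) p

theorem IsDiffOp.pow_succ_apply_eq_zero {R : Type*} [CommRing R] {n : ℕ} {D : AddMonoid.End R}
    (hD : IsDiffOp R n D) (r : R) :
    ((mulLeft ℤ (AddMonoid.End.mulLeft r) - mulRight ℤ (AddMonoid.End.mulLeft r)) ^ (n + 1)) D
      = 0 := by
  induction n generalizing D with
  | zero =>
    ext s
    exact sub_eq_zero.2 (hD r s).symm
  | succ n ih =>
    have hcomm : (mulLeft ℤ (AddMonoid.End.mulLeft r) - mulRight ℤ (AddMonoid.End.mulLeft r)) D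
        = -(D * AddMonoid.End.mulLeft r - AddMonoid.End.mulLeft r * D) :=
      (neg_sub _ _).symm
    rw [pow_succ, Module.End.mul_apply, hcomm, map_neg, neg_eq_zero]
    exact ih (hD r)

theorem IsDiffOp.commute_mulLeft_pow_expChar_pow {R : Type*} [CommRing R] (p : ℕ) [ExpChar R p]
    {e : ℕ} {D : AddMonoid.End R} (hD : IsDiffOp R (p ^ e - 1) D) (x : R) :
    Commute (AddMonoid.End.mulLeft (x ^ p ^ e)) D := by
  have hkill := hD.pow_succ_apply_eq_zero x
  have hpow : AddMonoid.End.mulLeft x ^ p ^ e = AddMonoid.End.mulLeft (x ^ p ^ e) :=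
    (map_pow (Module.toAddMonoidEnd R R) x _).symm
  rw [Nat.sub_add_cancel (Nat.one_le_pow _ _ (expChar_pos R p)),
    mulLeft_sub_mulRight_pow_expChar_pow, hpow] at hkill
  exact sub_eq_zero.1 hkill

/-- A differential operator of order at most `q - 1` annihilating `1` vanishes on `q`-th
powers, where `q = p ^ e` and `R` has characteristic `p > 0`. -/
theorem diffOp_plus_vanishes_on_pow_q
    (R : Type*) [CommRing R] (p : ℕ) [Fact p.Prime] [CharP R p]
    (e q : ℕ) (hq : q = p ^ e) (D : R →+ R) (hD : IsDiffOp R (q - 1) D)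
    (hD1 : D 1 = 0) (x : R) : D (x ^ q) = 0 := by
  subst hq
  have h : x ^ p ^ e * D 1 = D (x ^ p ^ e * 1) :=
    DFunLike.congr_fun (hD.commute_mulLeft_pow_expChar_pow p x).eq 1
  rw [hD1, mul_zero, mul_one] at h
  exact h.symm
end

section
/- Let R be a commutative ring and x ∈ R a nonzero divisor. For all nonnegative integers a, b and every differential operator D : R → R of order at most a, the operator x^{a−b} D x^b : r ↦ x^{a−b} · D(x^b · r) (for a < b understood via x^b · (x^{a−b} D x^b) = x^a D x^b, using that x is a nonzero divisor) lies in Σ_{k=0}^{a} x^k · Diff_R^k; in particular, when a ≥ b, x^{a−b} D x^b maps x^m R into x^m R for every m ≥ 0. -/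
lemma isDiffOp_zero (R : Type*) [CommRing R] : ∀ n, IsDiffOp R n (0 : R →+ R)
  | 0 => by intro r s; simp
  | n + 1 => by
      intro r
      have h : ((0 : R →+ R).comp (AddMonoidHom.mulLeft r))
          - ((AddMonoidHom.mulLeft r).comp 0) = 0 := by ext s; simp
      rw [h]; exact isDiffOp_zero R n

lemma isDiffOp_add (R : Type*) [CommRing R] :
    ∀ n (D D' : R →+ R), IsDiffOp R n D → IsDiffOp R n D' → IsDiffOp R n (D + D')
  | 0, D, D', hD, hD' => by
      intro r s
      simp only [AddMonoidHom.add_apply, hD r s, hD' r s, mul_add]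
  | n + 1, D, D', hD, hD' => by
      intro r
      have h : ((D + D').comp (AddMonoidHom.mulLeft r))
          - ((AddMonoidHom.mulLeft r).comp (D + D')) =
          (D.comp (AddMonoidHom.mulLeft r) - (AddMonoidHom.mulLeft r).comp D) +
          (D'.comp (AddMonoidHom.mulLeft r) - (AddMonoidHom.mulLeft r).comp D') := by
        ext s; simp; ring
      rw [h]; exact isDiffOp_add R n _ _ (hD r) (hD' r)

lemma hironaka_key (R : Type*) [CommRing R] (x : R) :
    ∀ a b (D : R →+ R), IsDiffOp R a D →
    ∃ E : ℕ → (R →+ R), (∀ k, k ≤ a → IsDiffOp R k (E k)) ∧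
      ∀ r : R, x ^ a * D (x ^ b * r) =
        x ^ b * ∑ k ∈ Finset.range (a + 1), x ^ k * E k r := by
  intro a
  induction a with
  | zero =>
    intro b D hD
    refine ⟨fun _ => D, fun k hk => by rw [Nat.le_zero.mp hk]; exact hD, ?_⟩
    intro r
    have := hD (x ^ b) r
    simp [this]
  | succ a ih =>
    intro b
    induction b with
    | zero =>
      intro D hD
      refine ⟨fun k => if k = a + 1 then D else 0, ?_, ?_⟩
      · intro k hk
        by_cases h : k = a + 1
        · subst h; simpa using hD
        · simpa [h] using isDiffOp_zero R k
      · intro r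
        rw [Finset.sum_eq_single (a + 1)]
        · simp
        · intro k hk hne; simp [hne]
        · intro h; simp at h
    | succ b ihb =>
      intro D hD
      obtain ⟨E, hE, heqE⟩ := ihb D hD
      set D' := (D.comp (AddMonoidHom.mulLeft x)) - ((AddMonoidHom.mulLeft x).comp D)
        with hD'def
      obtain ⟨F, hF, heqF⟩ := ih b D' (hD x)
      refine ⟨fun k => if k ≤ a then E k + F k else E k, ?_, ?_⟩
      · intro k hk
        by_cases h : k ≤ a
        · simpa [h] using isDiffOp_add R k _ _ (hE k (by omega)) (hF k h)
        · simpa [h] using hE k hk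
      · intro r
        have hD'app : D' (x ^ b * r) = D (x ^ (b + 1) * r) - x * D (x ^ b * r) := by
          have : x ^ (b + 1) * r = x * (x ^ b * r) := by ring
          rw [this]
          simp only [hD'def, AddMonoidHom.sub_apply, AddMonoidHom.coe_comp,
            Function.comp_apply, AddMonoidHom.coe_mulLeft]
        have hsplit : D (x ^ (b + 1) * r) = x * D (x ^ b * r) + D' (x ^ b * r) := by
          rw [hD'app]; ring
        have hsum : ∑ k ∈ Finset.range (a + 2),
            x ^ k * (if k ≤ a then E k + F k else E k) r =
            (∑ k ∈ Finset.range (a + 2), x ^ k * E k r) +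
            ∑ k ∈ Finset.range (a + 1), x ^ k * F k r := by
          rw [Finset.sum_range_succ, Finset.sum_range_succ (fun k => x ^ k * E k r)]
          have h1 : ∀ k ∈ Finset.range (a + 1),
              x ^ k * (if k ≤ a then E k + F k else E k) r
              = x ^ k * E k r + x ^ k * F k r := by
            intro k hk
            have : k ≤ a := by simpa [Nat.lt_succ_iff] using hk
            simp [this, mul_add]
          rw [Finset.sum_congr rfl h1, Finset.sum_add_distrib]
          have : ¬ (a + 1 ≤ a) := by omega
          simp [this]
          ring
        calc x ^ (a + 1) * D (x ^ (b + 1) * r)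
            = x * (x ^ (a + 1) * D (x ^ b * r)) + x * (x ^ a * D' (x ^ b * r)) := by
              rw [hsplit]; ring
          _ = x * (x ^ b * ∑ k ∈ Finset.range (a + 2), x ^ k * E k r)
              + x * (x ^ b * ∑ k ∈ Finset.range (a + 1), x ^ k * F k r) := by
              rw [heqE r, heqF r]
          _ = x ^ (b + 1) * ∑ k ∈ Finset.range (a + 2),
                x ^ k * (if k ≤ a then E k + F k else E k) r := by
              rw [hsum]; ring

/-- Hironaka's lemma: for a nonzerodivisor `x`, integers `a, b ≥ 0` and a differential
operator `D` of order at most `a`, the operator `x^{a-b} D x^b` lies in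
`Σ_{k=0}^{a} x^k · Diff_R^k` (stated after multiplying through by `x^b`); in particular,
when `a ≥ b` the operator `x^{a-b} D x^b` maps `x^m R` into `x^m R` for every `m ≥ 0`. -/
theorem hironaka_lemma
    (R : Type*) [CommRing R] (x : R) (hx : x ∈ nonZeroDivisors R)
    (a b : ℕ) (D : R →+ R) (hD : IsDiffOp R a D) :
    (∃ E : ℕ → (R →+ R), (∀ k, k ≤ a → IsDiffOp R k (E k)) ∧
      ∀ r : R, x ^ a * D (x ^ b * r) =
        x ^ b * ∑ k ∈ Finset.range (a + 1), x ^ k * E k r) ∧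
    (b ≤ a → ∀ m : ℕ, ∀ r : R, x ^ m ∣ x ^ (a - b) * D (x ^ b * (x ^ m * r))) := by
  obtain ⟨E, hE, heq⟩ := hironaka_key R x a b D hD
  refine ⟨⟨E, hE, heq⟩, ?_⟩
  intro hba m r
  have hdvd : x ^ m ∣ ∑ k ∈ Finset.range (a + 1), x ^ k * E k (x ^ m * r) := by
    refine Finset.dvd_sum ?_
    intro k hk
    obtain ⟨F, hF, heqk⟩ :=
      hironaka_key R x k m (E k) (hE k (by simpa [Nat.lt_succ_iff] using hk))
    exact ⟨_, heqk r⟩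
  obtain ⟨t, ht⟩ := hdvd
  refine ⟨t, ?_⟩
  have hxb : x ^ b ∈ nonZeroDivisors R := pow_mem hx b
  have key : x ^ b * (x ^ (a - b) * D (x ^ b * (x ^ m * r))) = x ^ b * (x ^ m * t) := by
    rw [← mul_assoc, ← pow_add, Nat.add_sub_cancel' hba, heq (x ^ m * r), ht]
  exact mul_cancel_left_mem_nonZeroDivisors hxb |>.mp key
end

section
/- Let R be a commutative ring of characteristic p > 0, q = p^e, Λ a finite collection of ideals of R, and 1 ≤ i ≤ q − 1. For any nonempty subset S ⊆ R, the ideal generated by all evaluations D(s) with D a Λ-logarithmic differential operator of order ≤ i satisfying D(1) = 0 and s ∈ S equals the corresponding ideal with S replaced by the R^q-subalgebra R^q[S] of R generated by S. -/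
namespace LogDiffAux
variable {R : Type*} [CommRing R]

/-- the commutator `[D, mulLeft x]`. -/
def ad (x : R) (D : R →+ R) : R →+ R :=
  (D.comp (AddMonoidHom.mulLeft x)) - ((AddMonoidHom.mulLeft x).comp D)

lemma ad_apply (x : R) (D : R →+ R) (t : R) : ad x D t = D (x * t) - x * D t := rfl

lemma isDiffOp_succ_iff {n : ℕ} {D : R →+ R} :
    IsDiffOp R (n + 1) D ↔ ∀ x : R, IsDiffOp R n (ad x D) := Iff.rfl

lemma isDiffOp_zero_zero (n : ℕ) : IsDiffOp R n (0 : R →+ R) := by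
  induction n with
  | zero => intro r s; simp
  | succ n ih =>
    intro r
    show IsDiffOp R n (ad r 0)
    have : ad r (0 : R →+ R) = 0 := by ext t; simp [ad_apply]
    rw [this]; exact ih

lemma ad_ad_comm (x y : R) (D : R →+ R) : ad y (ad x D) = ad x (ad y D) := by
  ext t
  simp only [ad_apply, map_sub, mul_sub]
  rw [show y * (x * t) = x * (y * t) by ring]
  ring

lemma isDiffOp_ad {n : ℕ} {D : R →+ R} (h : IsDiffOp R n D) (x : R) :
    IsDiffOp R n (ad x D) := by
  induction n generalizing D x with
  | zero =>
    have : ad x D = 0 := by ext t; simp [ad_apply, h x t]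
    rw [this]; exact isDiffOp_zero_zero 0
  | succ n ih =>
    rw [isDiffOp_succ_iff]
    intro y
    rw [ad_ad_comm]
    exact ih (h y) x

lemma isDiffOp_succ {n : ℕ} {D : R →+ R} (h : IsDiffOp R n D) : IsDiffOp R (n + 1) D :=
  fun x => isDiffOp_ad h x

lemma isDiffOp_mono {n m : ℕ} (hnm : n ≤ m) {D : R →+ R} (h : IsDiffOp R n D) :
    IsDiffOp R m D := by
  induction hnm with
  | refl => exact h
  | step _ ih => exact isDiffOp_succ ih

lemma isDiffOp_sub {n : ℕ} {D E : R →+ R} (hD : IsDiffOp R n D) (hE : IsDiffOp R n E) :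
    IsDiffOp R n (D - E) := by
  induction n generalizing D E with
  | zero =>
    intro r s
    simp only [AddMonoidHom.sub_apply, hD r s, hE r s, mul_sub]
  | succ n ih =>
    intro x
    show IsDiffOp R n (ad x (D - E))
    have : ad x (D - E) = ad x D - ad x E := by ext t; simp [ad_apply]; ring
    rw [this]
    exact ih (hD x) (hE x)

lemma isDiffOp_mulLeft (c : R) (n : ℕ) : IsDiffOp R n (AddMonoidHom.mulLeft c) := by
  have h0 : IsDiffOp R 0 (AddMonoidHom.mulLeft c) := by
    intro r s; show c * (r * s) = r * (c * s); ring
  exact isDiffOp_mono (Nat.zero_le n) h0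

end LogDiffAux

namespace Key
variable {R : Type*} [CommRing R]

lemma key : ∀ (n : ℕ) (D : R →+ R), IsDiffOp R n D → ∀ (x t : R),
    ∑ j ∈ Finset.range (n + 2),
      (-1 : R) ^ j * ((n + 1).choose j : R) * x ^ (n + 1 - j) * D (x ^ j * t) = 0 := by
  intro n
  induction n with
  | zero =>
    intro D h x t
    simp [Finset.sum_range_succ, h x t]
  | succ n ih =>
    intro D h x t
    have IH := ih _ (h x) x t
    set A : R := ∑ j ∈ Finset.range (n + 2),
        (-1 : R) ^ j * ((n + 1).choose j : R) * x ^ (n + 1 - j) * D (x ^ (j + 1) * t) with hAdef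
    set B : R := ∑ j ∈ Finset.range (n + 2),
        (-1 : R) ^ j * ((n + 1).choose j : R) * x ^ (n + 2 - j) * D (x ^ j * t) with hBdef
    set A' : R := ∑ j ∈ Finset.range (n + 2),
        (-1 : R) ^ j * ((n + 1).choose (j + 1) : R) * x ^ (n + 1 - j) * D (x ^ (j + 1) * t)
      with hA'def
    have hS : A - B = 0 := by
      rw [hAdef, hBdef, ← Finset.sum_sub_distrib, ← IH]
      refine Finset.sum_congr rfl fun j hj => ?_
      have hj' : j ≤ n + 1 := by simpa [Nat.lt_succ_iff] using hj
      have hx1 : x ^ (n + 2 - j) = x ^ (n + 1 - j) * x := by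
        rw [← pow_succ]; congr 1; omega
      simp only [AddMonoidHom.sub_apply, AddMonoidHom.comp_apply, AddMonoidHom.coe_mulLeft]
      rw [show x * (x ^ j * t) = x ^ (j + 1) * t by ring, hx1]
      ring
    have hA'trunc : A' = ∑ j ∈ Finset.range (n + 1),
        (-1 : R) ^ j * ((n + 1).choose (j + 1) : R) * x ^ (n + 1 - j) * D (x ^ (j + 1) * t) := by
      rw [hA'def, Finset.sum_range_succ]
      simp [Nat.choose_succ_self]
    have hB : B = x ^ (n + 2) * D t - A' := by
      rw [hBdef, Finset.sum_range_succ', hA'trunc]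
      have : ∑ j ∈ Finset.range (n + 1),
          (-1 : R) ^ (j + 1) * ((n + 1).choose (j + 1) : R) * x ^ (n + 2 - (j + 1)) *
            D (x ^ (j + 1) * t)
          = -∑ j ∈ Finset.range (n + 1),
          (-1 : R) ^ j * ((n + 1).choose (j + 1) : R) * x ^ (n + 1 - j) * D (x ^ (j + 1) * t) := by
        rw [← Finset.sum_neg_distrib]
        refine Finset.sum_congr rfl fun j hj => ?_
        have : n + 2 - (j + 1) = n + 1 - j := by omega
        rw [this]
        ring
      rw [this]
      simp
      ring
    have h1 : ∑ j ∈ Finset.range (n + 2),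
        (-1 : R) ^ (j + 1) * ((n + 1 + 1).choose (j + 1) : R) * x ^ (n + 1 + 1 - (j + 1)) *
          D (x ^ (j + 1) * t) = -A - A' := by
      have : ∀ j ∈ Finset.range (n + 2),
          (-1 : R) ^ (j + 1) * ((n + 1 + 1).choose (j + 1) : R) * x ^ (n + 1 + 1 - (j + 1)) *
            D (x ^ (j + 1) * t)
          = -((-1 : R) ^ j * ((n + 1).choose j : R) * x ^ (n + 1 - j) * D (x ^ (j + 1) * t))
            + -((-1 : R) ^ j * ((n + 1).choose (j + 1) : R) * x ^ (n + 1 - j) *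
                D (x ^ (j + 1) * t)) := by
        intro j hj
        have he : n + 1 + 1 - (j + 1) = n + 1 - j := by omega
        rw [he, Nat.choose_succ_succ]
        push_cast
        ring
      rw [Finset.sum_congr rfl this, Finset.sum_add_distrib, hAdef, hA'def,
        Finset.sum_neg_distrib, Finset.sum_neg_distrib]
      ring
    rw [Finset.sum_range_succ', h1]
    simp only [pow_zero, one_mul, Nat.choose_zero_right, Nat.cast_one, Nat.sub_zero]
    linear_combination -hS - hB

end Key

section Main
variable {R : Type*} [CommRing R]

lemma qlinear {p : ℕ} [Fact p.Prime] [CharP R p] {e q : ℕ} (hq : q = p ^ e) (hq2 : 2 ≤ q)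
    {D : R →+ R} (hD : IsDiffOp R (q - 1) D) (x t : R) :
    D (x ^ q * t) = x ^ q * D t := by
  have hk := Key.key (q - 1) D hD x t
  rw [show q - 1 + 2 = q + 1 by omega, show q - 1 + 1 = q by omega] at hk
  rw [Finset.sum_range_succ] at hk
  have hmid : ∑ j ∈ Finset.range q,
      (-1 : R) ^ j * (q.choose j : R) * x ^ (q - j) * D (x ^ j * t) = x ^ q * D t := by
    rw [Finset.sum_eq_single_of_mem 0 (Finset.mem_range.mpr (by omega))]
    · simp
    · intro j hj hj0
      have hjq : j ≠ q := by have := Finset.mem_range.mp hj; omega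
      have hdvd : p ∣ q.choose j := by
        subst hq
        exact (Fact.out : p.Prime).dvd_choose_pow hj0 hjq
      have : (q.choose j : R) = 0 := (CharP.cast_eq_zero_iff R p _).mpr hdvd
      rw [this]
      ring
  rw [hmid] at hk
  have hneg : ((-1 : R)) ^ q = -1 := by
    rcases (Fact.out : p.Prime).eq_two_or_odd' with h2 | hodd
    · have h20 : (2 : R) = 0 := by
        have := CharP.cast_eq_zero R p
        rw [h2] at this
        exact_mod_cast this
      have hneg1 : (-1 : R) = 1 := by linear_combination -h20
      rw [hneg1, one_pow]
    · have : Odd q := hq ▸ hodd.pow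
      exact this.neg_one_pow
  rw [hneg] at hk
  simp only [Nat.sub_self, pow_zero, Nat.choose_self, Nat.cast_one] at hk
  linear_combination -hk

end Main

/-- Evaluating `Λ`-logarithmic differential operators of order at most `i < q`
annihilating `1` on a nonempty subset `S ⊆ R` generates the same ideal as evaluating
them on the `R^q`-subalgebra `R^q[S]` generated by `S`. -/
theorem logDiff_eval_eq_on_pow_q_subalgebra
    (R : Type*) [CommRing R] (p : ℕ) [Fact p.Prime] [CharP R p]
    (e q : ℕ) (hq : q = p ^ e) (Λ : Finset (Ideal R))
    (i : ℕ) (hi1 : 1 ≤ i) (hi2 : i ≤ q - 1) (S : Set R) (hS : S.Nonempty) :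
    Ideal.span {y : R | ∃ D : R →+ R, IsDiffOp R i D ∧ D 1 = 0 ∧
        (∀ I ∈ Λ, ∀ k : ℕ, ∀ r ∈ I ^ k, D r ∈ I ^ k) ∧ ∃ s ∈ S, D s = y} =
    Ideal.span {y : R | ∃ D : R →+ R, IsDiffOp R i D ∧ D 1 = 0 ∧
        (∀ I ∈ Λ, ∀ k : ℕ, ∀ r ∈ I ^ k, D r ∈ I ^ k) ∧
        ∃ s ∈ (Subring.closure ({u : R | ∃ z : R, z ^ q = u} ∪ S) : Set R), D s = y} := by
  have hq2 : 2 ≤ q := by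
    rcases Nat.lt_or_ge q 2 with h | h
    · interval_cases q <;> omega
    · exact h
  set J : Ideal R := Ideal.span {y : R | ∃ D : R →+ R, IsDiffOp R i D ∧ D 1 = 0 ∧
      (∀ I ∈ Λ, ∀ k : ℕ, ∀ r ∈ I ^ k, D r ∈ I ^ k) ∧ ∃ s ∈ S, D s = y} with hJ
  have claim : ∀ s : R, s ∈ Subring.closure ({u : R | ∃ z : R, z ^ q = u} ∪ S) →
      ∀ D : R →+ R, IsDiffOp R i D → D 1 = 0 →
      (∀ I ∈ Λ, ∀ k : ℕ, ∀ r ∈ I ^ k, D r ∈ I ^ k) → D s ∈ J := by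
    intro s hs
    induction hs using Subring.closure_induction with
    | mem x hx =>
      intro D hD hD1 hlog
      rcases hx with ⟨z, rfl⟩ | hxS
      · have hDq : IsDiffOp R (q - 1) D := LogDiffAux.isDiffOp_mono hi2 hD
        have := qlinear hq hq2 hDq z 1
        rw [mul_one, hD1, mul_zero] at this
        rw [this]
        exact zero_mem J
      · exact Ideal.subset_span ⟨D, hD, hD1, hlog, x, hxS, rfl⟩
    | zero => intro D _ _ _; rw [map_zero]; exact zero_mem J
    | one => intro D _ hD1 _; rw [hD1]; exact zero_mem J
    | add x y hx hy ihx ihy =>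
      intro D hD hD1 hlog
      rw [map_add]
      exact add_mem (ihx D hD hD1 hlog) (ihy D hD hD1 hlog)
    | neg x hx ihx =>
      intro D hD hD1 hlog
      rw [map_neg]
      exact neg_mem (ihx D hD hD1 hlog)
    | mul x y hx hy ihx ihy =>
      intro D hD hD1 hlog
      set D' : R →+ R := (LogDiffAux.ad x D) - AddMonoidHom.mulLeft (D x) with hD'def
      have hD'apply : ∀ r : R, D' r = D (x * r) - x * D r - D x * r := by
        intro r
        simp only [hD'def, AddMonoidHom.sub_apply, LogDiffAux.ad_apply,
          AddMonoidHom.coe_mulLeft]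
      have hD'diff : IsDiffOp R i D' := by
        have h1 : IsDiffOp R (i - 1) (LogDiffAux.ad x D) := by
          have hD' : IsDiffOp R ((i - 1) + 1) D := by
            rwa [show i - 1 + 1 = i by omega]
          exact hD' x
        exact LogDiffAux.isDiffOp_sub
          (LogDiffAux.isDiffOp_mono (by omega) h1)
          (LogDiffAux.isDiffOp_mulLeft (D x) i)
      have hD'1 : D' 1 = 0 := by
        rw [hD'apply 1]
        simp [hD1]
      have hD'log : ∀ I ∈ Λ, ∀ k : ℕ, ∀ r ∈ I ^ k, D' r ∈ I ^ k := by
        intro I hI k r hr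
        rw [hD'apply r]
        exact sub_mem (sub_mem (hlog I hI k _ (Ideal.mul_mem_left _ x hr))
          (Ideal.mul_mem_left _ x (hlog I hI k r hr))) (Ideal.mul_mem_left _ (D x) hr)
      have hmul : D (x * y) = D' y + x * D y + D x * y := by
        rw [hD'apply y]
        ring
      rw [hmul]
      exact add_mem (add_mem (ihy D' hD'diff hD'1 hD'log)
        (Ideal.mul_mem_left _ x (ihy D hD hD1 hlog)))
        (Ideal.mul_mem_right y _ (ihx D hD hD1 hlog))
  apply le_antisymm
  · refine Ideal.span_mono ?_
    rintro y ⟨D, h1, h2, h3, s, hs, hy⟩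
    exact ⟨D, h1, h2, h3, s, Subring.subset_closure (Or.inr hs), hy⟩
  · rw [Ideal.span_le]
    rintro y ⟨D, hD, hD1, hlog, s, hs, rfl⟩
    exact claim s hs D hD hD1 hlog
end

section
/- Let (R, m) be an F-finite regular local ring of characteristic p > 0 with an adapted p-basis (x_1, …, x_r, y_1, …, y_s) (the x_i form a regular system of parameters and the residues of the y_j form a p-basis of R/m), let q = p^e, and let f ∈ R have q-expansion f = Σ_{(α,β) ∈ A_q} c_{α,β}^q x^α y^β with A_q = {(α,β) : 0 ≤ α_i, β_j < q}. Then for every n ≥ 0: f ∈ m^n if and only if c_{α,β}^q x^α y^β ∈ m^n for all (α,β) ∈ A_q. -/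
/-!
The `q`-th powers form a subring `A` of `R` (the image of the `e`-th iterated Frobenius), and
the hypotheses say that the monomials `x ^ α * y ^ β` with exponents `< q` form an `A`-basis
of `R`. Multiplying a single term `u ^ q * x ^ α * y ^ β` by some `x i` gives again a single
term (an exponent reaching `q` is carried into the coefficient), so by induction on `n` the
ideal `m ^ n = (x) ^ n` is `A`-spanned by single terms lying in `m ^ n`. A coordinate
projection of the basis sends a single term to itself or to `0`, hence maps `m ^ n` into itself.
-/

/-- A Noetherian local ring is regular when its maximal ideal is generated by a regular
sequence. -/
def IsRegularLocal (R : Type*) [CommRing R] [IsLocalRing R] : Prop :=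
  IsNoetherianRing R ∧ ∃ rs : List R,
    RingTheory.Sequence.IsRegular R rs ∧
    Ideal.span {x | x ∈ rs} = IsLocalRing.maximalIdeal R

open Submodule

namespace Module.Basis

variable {ι A M : Type*} [Semiring A] [AddCommMonoid M] [Module A M]

def terms (b : Basis ι A M) : Set M := ⋃ i, Set.range fun a : A => a • b i

theorem smul_mem_terms (b : Basis ι A M) (a : A) {v : M} (hv : v ∈ b.terms) :
    a • v ∈ b.terms := by
  obtain ⟨i, a', rfl⟩ := Set.mem_iUnion.mp hv
  exact Set.mem_iUnion.mpr ⟨i, a * a', mul_smul a a' (b i)⟩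

theorem repr_apply_smul_mem {b : Basis ι A M} {N : Submodule A M}
    (hN : N ≤ span A (b.terms ∩ N)) {v : M} (hv : v ∈ N) (i : ι) :
    b.repr v i • b i ∈ N := by
  obtain hv' := hN hv
  clear hv
  induction hv' using span_induction with
  | mem v hv =>
    obtain ⟨hvb, hvN⟩ := hv
    obtain ⟨j, a, rfl⟩ := Set.mem_iUnion.mp hvb
    classical
    rw [map_smul, repr_self, Finsupp.smul_single, Finsupp.single_apply]
    split_ifs with hji
    · simpa [← hji] using hvN
    · rw [zero_smul]; exact N.zero_mem
  | zero => simp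
  | add u v _ _ hu hv => rw [map_add, Finsupp.add_apply, add_smul]; exact N.add_mem hu hv
  | smul a v _ hv => rw [map_smul, Finsupp.smul_apply, smul_eq_mul, mul_smul]; exact N.smul_mem a hv

theorem span_terms (b : Basis ι A M) : span A b.terms = ⊤ :=
  eq_top_iff.mpr <| b.span_eq.ge.trans <| span_mono <| Set.range_subset_iff.mpr fun i =>
    Set.mem_iUnion.mpr ⟨i, 1, one_smul A (b i)⟩

theorem mul_mem_terms {R : Type*} [Semiring R] [Module A R] [IsScalarTower A R R]
    (b : Basis ι A R) {z : R} (hz : ∀ i, b i * z ∈ b.terms) {t : R} (ht : t ∈ b.terms) :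
    t * z ∈ b.terms := by
  obtain ⟨i, a, rfl⟩ := Set.mem_iUnion.mp ht
  rw [smul_mul_assoc]
  exact b.smul_mem_terms a (hz i)

end Module.Basis

theorem restrictScalars_span_pow_le_span_inter {ι A R : Type*} [Fintype ι] [CommSemiring A]
    [CommSemiring R] [Algebra A R] (x : ι → R) {T : Set R} (hT : span A T = ⊤)
    (hTx : ∀ t ∈ T, ∀ i, t * x i ∈ T) (n : ℕ) :
    (Ideal.span (Set.range x) ^ n).restrictScalars A ≤
      span A (T ∩ (Ideal.span (Set.range x) ^ n : Ideal R)) := by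
  set I := Ideal.span (Set.range x)
  induction n with
  | zero => simp [hT]
  | succ n ih =>
    have hmul : ∀ g ∈ I ^ n, ∀ i, g * x i ∈ span A (T ∩ (I ^ (n + 1) : Ideal R)) := by
      intro g hg i
      refine (map_span_le (LinearMap.mulRight A (x i)) _ _).mpr ?_ (mem_map_of_mem (ih hg))
      rintro t ⟨htT, htI⟩
      exact subset_span ⟨hTx t htT i,
        pow_succ I n ▸ Ideal.mul_mem_mul htI (Ideal.subset_span ⟨i, rfl⟩)⟩
    intro g hg
    rw [restrictScalars_mem, pow_succ] at hg
    refine Submodule.mul_induction_on hg (fun a ha b hb => ?_) (fun _ _ => add_mem)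
    obtain ⟨c, rfl⟩ := (mem_span_range_iff_exists_fun R).mp hb
    rw [Finset.mul_sum]
    refine sum_mem fun i _ => ?_
    rw [smul_eq_mul, ← mul_assoc, mul_comm a]
    exact hmul _ ((I ^ n).mul_mem_left _ ha) i

theorem Finset.prod_pow_eq_pow_div_mul_prod_pow_mod {ι M : Type*} [CommMonoid M] [Fintype ι]
    (x : ι → M) (γ : ι → ℕ) (q : ℕ) :
    ∏ i, x i ^ γ i = (∏ i, x i ^ (γ i / q)) ^ q * ∏ i, x i ^ (γ i % q) := by
  rw [← Finset.prod_pow, ← Finset.prod_mul_distrib]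
  refine Finset.prod_congr rfl fun i _ => ?_
  rw [← pow_mul, ← pow_add, mul_comm, Nat.div_add_mod]

section QMonomial

variable {R ι κ : Type*} [CommRing R] [Fintype ι] [Fintype κ] {q : ℕ}

def qMonomial (x : ι → R) (y : κ → R) (αβ : (ι → Fin q) × (κ → Fin q)) : R :=
  (∏ i, x i ^ (αβ.1 i : ℕ)) * ∏ j, y j ^ (αβ.2 j : ℕ)

theorem exists_mul_eq_pow_mul_qMonomial [NeZero q] [DecidableEq ι] (x : ι → R) (y : κ → R)
    (αβ : (ι → Fin q) × (κ → Fin q)) (i : ι) :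
    ∃ (u : R) (αβ' : (ι → Fin q) × (κ → Fin q)),
      qMonomial x y αβ * x i = u ^ q * qMonomial x y αβ' := by
  set γ : ι → ℕ := fun k => αβ.1 k + if k = i then 1 else 0
  refine ⟨∏ k, x k ^ (γ k / q), (fun k => Fin.ofNat q (γ k), αβ.2), ?_⟩
  have hγ : ∏ k, x k ^ γ k = (∏ k, x k ^ (αβ.1 k : ℕ)) * x i := by
    simp only [γ, pow_add, Finset.prod_mul_distrib, pow_ite, pow_one, pow_zero,
      Finset.prod_ite_eq']
    simp
  simp only [qMonomial, Fin.val_ofNat]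
  rw [← mul_assoc, ← Finset.prod_pow_eq_pow_div_mul_prod_pow_mod, hγ]
  ring

end QMonomial

section IterateFrobenius

variable {R ι : Type*} [CommRing R] [Fintype ι] {p : ℕ} [ExpChar R p] {e : ℕ} {v : ι → R}

theorem linearIndependent_iterateFrobenius_range
    (hind : ∀ a : ι → R, (∀ i, ∃ u : R, a i = u ^ p ^ e) →
      ∑ i, a i * v i = 0 → ∀ i, a i = 0) :
    LinearIndependent (iterateFrobenius R p e).range v := by
  refine Fintype.linearIndependent_iff.mpr fun g hg i => Subtype.ext ?_
  refine hind (fun i => g i) (fun i => ?_) hg i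
  obtain ⟨u, hu⟩ := (g i).2
  exact ⟨u, by rw [← hu, iterateFrobenius_def]⟩

theorem top_le_span_iterateFrobenius_range
    (hspan : ∀ g : R, ∃ c : ι → R, g = ∑ i, c i ^ p ^ e * v i) :
    ⊤ ≤ span (iterateFrobenius R p e).range (Set.range v) := by
  intro g _
  obtain ⟨c, rfl⟩ := hspan g
  refine sum_mem fun i _ => ?_
  have hc : c i ^ p ^ e ∈ (iterateFrobenius R p e).range :=
    ⟨c i, iterateFrobenius_def p e (c i)⟩
  exact smul_mem _ (⟨_, hc⟩ : (iterateFrobenius R p e).range) (subset_span ⟨i, rfl⟩)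

end IterateFrobenius

theorem mem_pow_maximalIdeal_iff_terms_of_qExpansion_general
    (R : Type*) [CommRing R] [IsLocalRing R]
    (p : ℕ) [Fact p.Prime] [CharP R p]
    (e q : ℕ) (hq : q = p ^ e)
    (r s : ℕ) (x : Fin r → R) (y : Fin s → R)
    (hx : Ideal.span (Set.range x) = IsLocalRing.maximalIdeal R)
    (hbasis_span : ∀ g : R, ∃ c : (Fin r → Fin q) × (Fin s → Fin q) → R,
      g = ∑ αβ : (Fin r → Fin q) × (Fin s → Fin q),
        (c αβ) ^ q * ((∏ i, x i ^ (αβ.1 i : ℕ)) * ∏ j, y j ^ (αβ.2 j : ℕ)))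
    (hbasis_ind : ∀ a : (Fin r → Fin q) × (Fin s → Fin q) → R,
      (∀ αβ, ∃ u : R, a αβ = u ^ q) →
      (∑ αβ : (Fin r → Fin q) × (Fin s → Fin q),
        a αβ * ((∏ i, x i ^ (αβ.1 i : ℕ)) * ∏ j, y j ^ (αβ.2 j : ℕ))) = 0 →
      ∀ αβ, a αβ = 0)
    (f : R) (c : (Fin r → Fin q) × (Fin s → Fin q) → R)
    (hf : f = ∑ αβ : (Fin r → Fin q) × (Fin s → Fin q),
      (c αβ) ^ q * ((∏ i, x i ^ (αβ.1 i : ℕ)) * ∏ j, y j ^ (αβ.2 j : ℕ)))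
    (n : ℕ) :
    f ∈ IsLocalRing.maximalIdeal R ^ n ↔
      ∀ αβ : (Fin r → Fin q) × (Fin s → Fin q),
        (c αβ) ^ q * ((∏ i, x i ^ (αβ.1 i : ℕ)) * ∏ j, y j ^ (αβ.2 j : ℕ)) ∈
          IsLocalRing.maximalIdeal R ^ n := by
  subst hq
  set A := (iterateFrobenius R p e).range
  let b : Module.Basis _ A R := .mk (v := qMonomial x y)
    (linearIndependent_iterateFrobenius_range hbasis_ind)
    (top_le_span_iterateFrobenius_range hbasis_span)
  have hb : ∀ αβ, b αβ = qMonomial x y αβ := Module.Basis.mk_apply _ _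
  have hrepr : ∀ αβ, (b.repr f αβ : R) = c αβ ^ p ^ e := by
    let cA : _ → A := fun αβ => ⟨c αβ ^ p ^ e, c αβ, iterateFrobenius_def p e (c αβ)⟩
    have : f = b.equivFun.symm cA := by
      simp only [b.equivFun_symm_apply, hb, Subring.smul_def, smul_eq_mul, hf]
      rfl
    intro αβ
    rw [← b.equivFun_apply, this, LinearEquiv.apply_symm_apply]
  have hterms : ∀ t ∈ b.terms, ∀ i, t * x i ∈ b.terms := fun t ht i =>
    b.mul_mem_terms (fun αβ => by
      obtain ⟨u, αβ', h⟩ := exists_mul_eq_pow_mul_qMonomial x y αβ i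
      rw [hb, h, ← hb]
      exact Set.mem_iUnion.mpr ⟨αβ', ⟨u ^ p ^ e, u, iterateFrobenius_def p e u⟩, rfl⟩) ht
  rw [← hx]
  refine ⟨fun hfn αβ => ?_, fun h => hf ▸ Ideal.sum_mem _ fun αβ _ => h αβ⟩
  have := b.repr_apply_smul_mem
    (restrictScalars_span_pow_le_span_inter x b.span_terms hterms n)
    ((restrictScalars_mem A _ f).mpr hfn) αβ
  rwa [Subring.smul_def, smul_eq_mul, hrepr, hb] at this

/-- Setting: `(R, m)` is an `F`-finite regular local ring of characteristic `p > 0`,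
`q = p ^ e`, `(x 0, …, x (r-1), y 0, …, y (s-1))` is an adapted `p`-basis: the `x i`
form a regular system of parameters (they generate `m`), the monomials
`x ^ α * y ^ β` with exponents `< q` form an `R ^ q`-basis of `R`, and the residues of
the `y j` form a `p`-basis of the residue field `R / m`.  The element `f` has
`q`-expansion `f = Σ_{(α,β) ∈ A_q} (c (α,β)) ^ q * x ^ α * y ^ β`. -/
theorem mem_pow_maximalIdeal_iff_terms_of_qExpansion
    (R : Type*) [CommRing R] [IsDomain R] [IsLocalRing R] (hreg : IsRegularLocal R)
    (p : ℕ) [Fact p.Prime] [CharP R p]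
    (hF : Module.Finite (↥(frobenius R p).range) R)
    (e q : ℕ) (hq : q = p ^ e)
    (r s : ℕ) (x : Fin r → R) (y : Fin s → R)
    (hx : Ideal.span (Set.range x) = IsLocalRing.maximalIdeal R)
    (hbasis_span : ∀ g : R, ∃ c : (Fin r → Fin q) × (Fin s → Fin q) → R,
      g = ∑ αβ : (Fin r → Fin q) × (Fin s → Fin q),
        (c αβ) ^ q * ((∏ i, x i ^ (αβ.1 i : ℕ)) * ∏ j, y j ^ (αβ.2 j : ℕ)))
    (hbasis_ind : ∀ a : (Fin r → Fin q) × (Fin s → Fin q) → R,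
      (∀ αβ, ∃ u : R, a αβ = u ^ q) →
      (∑ αβ : (Fin r → Fin q) × (Fin s → Fin q),
        a αβ * ((∏ i, x i ^ (αβ.1 i : ℕ)) * ∏ j, y j ^ (αβ.2 j : ℕ))) = 0 →
      ∀ αβ, a αβ = 0)
    (hy_span : ∀ g : R, ∃ d : (Fin s → Fin p) → R,
      g - ∑ β : Fin s → Fin p, (d β) ^ p * ∏ j, y j ^ (β j : ℕ) ∈
        IsLocalRing.maximalIdeal R)
    (hy_ind : ∀ d : (Fin s → Fin p) → R,
      (∑ β : Fin s → Fin p, (d β) ^ p * ∏ j, y j ^ (β j : ℕ)) ∈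
          IsLocalRing.maximalIdeal R →
      ∀ β, d β ∈ IsLocalRing.maximalIdeal R)
    (f : R) (c : (Fin r → Fin q) × (Fin s → Fin q) → R)
    (hf : f = ∑ αβ : (Fin r → Fin q) × (Fin s → Fin q),
      (c αβ) ^ q * ((∏ i, x i ^ (αβ.1 i : ℕ)) * ∏ j, y j ^ (αβ.2 j : ℕ)))
    (n : ℕ) :
    f ∈ IsLocalRing.maximalIdeal R ^ n ↔
      ∀ αβ : (Fin r → Fin q) × (Fin s → Fin q),
        (c αβ) ^ q * ((∏ i, x i ^ (αβ.1 i : ℕ)) * ∏ j, y j ^ (αβ.2 j : ℕ)) ∈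
          IsLocalRing.maximalIdeal R ^ n :=
  mem_pow_maximalIdeal_iff_terms_of_qExpansion_general R p e q hq r s x y hx hbasis_span hbasis_ind
    f c hf n
end

section
/- Let (R, m) be an F-finite regular local ring of characteristic p > 0 with adapted p-basis (x_1, …, x_r, y_1, …, y_s), let q = p^e, and let f ∈ R have q-expansion f = Σ_{(α,β) ∈ A_q} c_{α,β}^q x^α y^β. Then for every n ≥ 0: f ∈ R^q + m^n if and only if c_{α,β}^q x^α y^β ∈ m^n for all (α,β) ∈ A_q with (α,β) ≠ (0,0). -/
open Finset
namespace QExpAux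
variable {R : Type*} [CommRing R]

abbrev Mon {r s q : ℕ} (x : Fin r → R) (y : Fin s → R)
    (t : (Fin r → Fin q) × (Fin s → Fin q)) : R :=
  (∏ i, x i ^ (t.1 i : ℕ)) * ∏ j, y j ^ (t.2 j : ℕ)

lemma prodpow_mul {r : ℕ} (x : Fin r → R) (g h : Fin r → ℕ) :
    (∏ k, x k ^ g k) * (∏ k, x k ^ h k) = ∏ k, x k ^ (g k + h k) := by
  rw [← Finset.prod_mul_distrib]
  exact Finset.prod_congr rfl fun k _ => (pow_add _ _ _).symm

lemma single_pow {r : ℕ} (x : Fin r → R) (i : Fin r) (m : ℕ) :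
    x i ^ m = ∏ k, x k ^ (if k = i then m else 0) := by
  simp [pow_ite, Finset.prod_ite_eq']

lemma xpow_mul_xi {r q : ℕ} (hq0 : 0 < q) (x : Fin r → R) (i : Fin r) (α : Fin r → Fin q) :
    (∏ k, x k ^ (α k : ℕ)) * x i
      = (x i ^ (((α i : ℕ) + 1) / q)) ^ q *
        ∏ k, x k ^ ((Function.update α i
          (⟨((α i : ℕ) + 1) % q, Nat.mod_lt _ hq0⟩ : Fin q)) k : ℕ) := by
  classical
  conv_lhs => rw [show x i = x i ^ 1 from (pow_one _).symm]
  rw [single_pow x i 1, prodpow_mul, ← pow_mul, single_pow x i _, prodpow_mul]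
  refine Finset.prod_congr rfl fun k _ => ?_
  by_cases hk : k = i
  · subst hk
    rw [Function.update_self]
    simp only [if_pos rfl]
    show x k ^ ((α k : ℕ) + 1) = x k ^ (((α k : ℕ) + 1) / q * q + ((α k : ℕ) + 1) % q)
    rw [Nat.div_add_mod']
  · rw [Function.update_of_ne hk]
    simp [hk]

lemma shift {r s q : ℕ} (hq0 : 0 < q) (x : Fin r → R) (y : Fin s → R) (i : Fin r)
    (a : (Fin r → Fin q) × (Fin s → Fin q) → R) :
    ∃ a' : (Fin r → Fin q) × (Fin s → Fin q) → R,
      (∀ t, ∃ t0 d, a' t = a t0 * (x i ^ d) ^ q ∧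
        a' t * Mon x y t = a t0 * Mon x y t0 * x i) ∧
      (∑ t, a t * Mon x y t) * x i = ∑ t, a' t * Mon x y t := by
  classical
  let succ : Fin q → Fin q := fun v => ⟨((v : ℕ) + 1) % q, Nat.mod_lt _ hq0⟩
  let F : (Fin r → Fin q) × (Fin s → Fin q) → (Fin r → Fin q) × (Fin s → Fin q) :=
    fun t => (Function.update t.1 i (succ (t.1 i)), t.2)
  have hsuccinj : Function.Injective succ := by
    intro v w h
    have hv : ((v : ℕ) + 1) % q = ((w : ℕ) + 1) % q := congrArg Fin.val h
    have h2 := congrArg (fun z => (z + (q - 1)) % q) hv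
    simp only [Nat.mod_add_mod] at h2
    have e1 : (v : ℕ) + 1 + (q - 1) = (v : ℕ) + q := by omega
    have e2 : (w : ℕ) + 1 + (q - 1) = (w : ℕ) + q := by omega
    rw [e1, e2, Nat.add_mod_right, Nat.add_mod_right, Nat.mod_eq_of_lt v.isLt,
      Nat.mod_eq_of_lt w.isLt] at h2
    exact Fin.ext h2
  have hinj : Function.Injective F := by
    intro t1 t2 h
    have h2 := congrArg Prod.snd h
    have h1 := congrArg Prod.fst h
    refine Prod.ext (funext fun k => ?_) h2
    have hck := congrFun h1 k
    rw [show (F t1).1 = Function.update t1.1 i (succ (t1.1 i)) from rfl,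
      show (F t2).1 = Function.update t2.1 i (succ (t2.1 i)) from rfl] at hck
    by_cases hk : k = i
    · rw [hk] at hck ⊢
      rw [Function.update_self, Function.update_self] at hck
      exact hsuccinj hck
    · rwa [Function.update_of_ne hk, Function.update_of_ne hk] at hck
  have hbij : Function.Bijective F := Finite.injective_iff_bijective.mp hinj
  let E := Equiv.ofBijective F hbij
  let b : (Fin r → Fin q) × (Fin s → Fin q) → R :=
    fun t => a t * (x i ^ (((t.1 i : ℕ) + 1) / q)) ^ q
  have key : ∀ t, a t * Mon x y t * x i = b t * Mon x y (F t) := by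
    intro t
    have hmon : Mon x y t * x i = (x i ^ (((t.1 i : ℕ) + 1) / q)) ^ q * Mon x y (F t) := by
      show (∏ k, x k ^ (t.1 k : ℕ)) * (∏ j, y j ^ (t.2 j : ℕ)) * x i
        = (x i ^ (((t.1 i : ℕ) + 1) / q)) ^ q *
          ((∏ k, x k ^ ((Function.update t.1 i (succ (t.1 i))) k : ℕ)) *
            ∏ j, y j ^ (t.2 j : ℕ))
      rw [mul_right_comm, xpow_mul_xi hq0 x i t.1]
      ring
    calc a t * Mon x y t * x i = a t * (Mon x y t * x i) := by ring
      _ = b t * Mon x y (F t) := by rw [hmon]; show _ = a t * _ * _; ring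
  refine ⟨fun t => b (E.symm t), fun t => ?_, ?_⟩
  · refine ⟨E.symm t, (((E.symm t).1 i : ℕ) + 1) / q, rfl, ?_⟩
    have hk := key (E.symm t)
    have hEt : F (E.symm t) = t := E.apply_symm_apply t
    rw [hEt] at hk
    exact hk.symm
  · rw [Finset.sum_mul]
    refine Fintype.sum_equiv E (fun t => a t * Mon x y t * x i)
      (fun t => b (E.symm t) * Mon x y t) fun t => ?_
    show a t * Mon x y t * x i = b (E.symm (E t)) * Mon x y (E t)
    rw [key t, E.symm_apply_apply]
    rfl

lemma expand_mem_pow {R : Type*} [CommRing R] [IsLocalRing R]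
    (p : ℕ) [Fact p.Prime] [CharP R p] (e q : ℕ) (hq : q = p ^ e)
    {r s : ℕ} (x : Fin r → R) (y : Fin s → R)
    (hx : Ideal.span (Set.range x) = IsLocalRing.maximalIdeal R)
    (hbasis_span : ∀ g : R, ∃ c : (Fin r → Fin q) × (Fin s → Fin q) → R,
      g = ∑ t : (Fin r → Fin q) × (Fin s → Fin q), (c t) ^ q * Mon x y t)
    (n : ℕ) :
    ∀ g ∈ IsLocalRing.maximalIdeal R ^ n,
      ∃ a : (Fin r → Fin q) × (Fin s → Fin q) → R,
        (∀ t, ∃ u, a t = u ^ q) ∧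
        (∀ t, a t * Mon x y t ∈ IsLocalRing.maximalIdeal R ^ n) ∧
        g = ∑ t, a t * Mon x y t := by
  classical
  have hq0 : 0 < q := hq ▸ pow_pos (Fact.out (p := p.Prime)).pos e
  induction n with
  | zero =>
    intro g _
    obtain ⟨c, hc⟩ := hbasis_span g
    exact ⟨fun t => c t ^ q, fun t => ⟨c t, rfl⟩, fun t => by simp, hc⟩
  | succ n ih =>
    -- closure properties of the (n+1)-predicate
    set P : R → Prop := fun g =>
      ∃ a : (Fin r → Fin q) × (Fin s → Fin q) → R,
        (∀ t, ∃ u, a t = u ^ q) ∧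
        (∀ t, a t * Mon x y t ∈ IsLocalRing.maximalIdeal R ^ (n + 1)) ∧
        g = ∑ t, a t * Mon x y t with hP
    have hPadd : ∀ g1 g2, P g1 → P g2 → P (g1 + g2) := by
      rintro g1 g2 ⟨a1, hp1, hm1, hs1⟩ ⟨a2, hp2, hm2, hs2⟩
      refine ⟨fun t => a1 t + a2 t, fun t => ?_, fun t => ?_, ?_⟩
      · obtain ⟨u1, hu1⟩ := hp1 t
        obtain ⟨u2, hu2⟩ := hp2 t
        exact ⟨u1 + u2, by show a1 t + a2 t = _; rw [hu1, hu2, hq, add_pow_char_pow]⟩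
      · rw [add_mul]; exact add_mem (hm1 t) (hm2 t)
      · rw [hs1, hs2, ← Finset.sum_add_distrib]
        exact Finset.sum_congr rfl fun t _ => (add_mul _ _ _).symm
    have hPzero : P 0 := by
      refine ⟨fun _ => 0, fun t => ⟨0, (zero_pow (by omega)).symm⟩,
        fun t => by simp, by simp⟩
    -- main claim by span induction on the m-factor
    have claim : ∀ b ∈ Ideal.span (Set.range x),
        ∀ m1 ∈ IsLocalRing.maximalIdeal R ^ n, P (m1 * b) := by
      intro b hb
      induction hb using Submodule.span_induction with
      | mem b hbmem =>
        obtain ⟨i, rfl⟩ := hbmem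
        intro m1 hm1
        obtain ⟨a, hpow, hmem, hsum⟩ := ih m1 hm1
        obtain ⟨a', hrep, hsumeq⟩ := shift hq0 x y i a
        refine ⟨a', fun t => ?_, fun t => ?_, ?_⟩
        · obtain ⟨t0, d, he, _⟩ := hrep t
          obtain ⟨u, hu⟩ := hpow t0
          exact ⟨u * x i ^ d, by rw [he, hu, mul_pow]⟩
        · obtain ⟨t0, d, _, he⟩ := hrep t
          rw [he, pow_succ]
          refine Ideal.mul_mem_mul (hmem t0) ?_
          rw [← hx]
          exact Ideal.subset_span ⟨i, rfl⟩
        · rw [hsum]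
          exact hsumeq
      | zero =>
        intro m1 _
        rw [mul_zero]
        exact hPzero
      | add b1 b2 _ _ ih1 ih2 =>
        intro m1 hm1
        rw [mul_add]
        exact hPadd _ _ (ih1 m1 hm1) (ih2 m1 hm1)
      | smul r' b _ ihb =>
        intro m1 hm1
        have : m1 * (r' • b) = (r' * m1) * b := by
          rw [smul_eq_mul]; ring
        rw [this]
        exact ihb (r' * m1) (Ideal.mul_mem_left _ _ hm1)
    intro g hg
    rw [pow_succ] at hg
    exact Submodule.mul_induction_on hg
      (fun m1 hm1 b hb => claim b (hx ▸ hb) m1 hm1) hPadd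

end QExpAux

/-- Setting: `(R, m)` is an `F`-finite regular local ring of characteristic `p > 0`,
`q = p ^ e`, `(x 0, …, x (r-1), y 0, …, y (s-1))` is an adapted `p`-basis: the `x i`
form a regular system of parameters (they generate `m`), the monomials
`x ^ α * y ^ β` with exponents `< q` form an `R ^ q`-basis of `R`, and the residues of
the `y j` form a `p`-basis of the residue field `R / m`.  The element `f` has
`q`-expansion `f = Σ_{(α,β) ∈ A_q} (c (α,β)) ^ q * x ^ α * y ^ β`. -/
theorem mem_powQ_add_pow_maximalIdeal_iff_nonconstant_terms
    (R : Type*) [CommRing R] [IsDomain R] [IsLocalRing R] (hreg : IsRegularLocal R)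
    (p : ℕ) [Fact p.Prime] [CharP R p]
    (hF : Module.Finite (↥(frobenius R p).range) R)
    (e q : ℕ) (hq : q = p ^ e)
    (r s : ℕ) (x : Fin r → R) (y : Fin s → R)
    (hx : Ideal.span (Set.range x) = IsLocalRing.maximalIdeal R)
    (hbasis_span : ∀ g : R, ∃ c : (Fin r → Fin q) × (Fin s → Fin q) → R,
      g = ∑ αβ : (Fin r → Fin q) × (Fin s → Fin q),
        (c αβ) ^ q * ((∏ i, x i ^ (αβ.1 i : ℕ)) * ∏ j, y j ^ (αβ.2 j : ℕ)))
    (hbasis_ind : ∀ a : (Fin r → Fin q) × (Fin s → Fin q) → R,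
      (∀ αβ, ∃ u : R, a αβ = u ^ q) →
      (∑ αβ : (Fin r → Fin q) × (Fin s → Fin q),
        a αβ * ((∏ i, x i ^ (αβ.1 i : ℕ)) * ∏ j, y j ^ (αβ.2 j : ℕ))) = 0 →
      ∀ αβ, a αβ = 0)
    (hy_span : ∀ g : R, ∃ d : (Fin s → Fin p) → R,
      g - ∑ β : Fin s → Fin p, (d β) ^ p * ∏ j, y j ^ (β j : ℕ) ∈
        IsLocalRing.maximalIdeal R)
    (hy_ind : ∀ d : (Fin s → Fin p) → R,
      (∑ β : Fin s → Fin p, (d β) ^ p * ∏ j, y j ^ (β j : ℕ)) ∈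
          IsLocalRing.maximalIdeal R →
      ∀ β, d β ∈ IsLocalRing.maximalIdeal R)
    (f : R) (c : (Fin r → Fin q) × (Fin s → Fin q) → R)
    (hf : f = ∑ αβ : (Fin r → Fin q) × (Fin s → Fin q),
      (c αβ) ^ q * ((∏ i, x i ^ (αβ.1 i : ℕ)) * ∏ j, y j ^ (αβ.2 j : ℕ)))
    (n : ℕ) :
    (∃ lam : R, f - lam ^ q ∈ IsLocalRing.maximalIdeal R ^ n) ↔
      ∀ αβ : (Fin r → Fin q) × (Fin s → Fin q),
        ¬ ((∀ i, (αβ.1 i : ℕ) = 0) ∧ ∀ j, (αβ.2 j : ℕ) = 0) →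
        (c αβ) ^ q * ((∏ i, x i ^ (αβ.1 i : ℕ)) * ∏ j, y j ^ (αβ.2 j : ℕ)) ∈
          IsLocalRing.maximalIdeal R ^ n := by
  classical
  have hq0 : 0 < q := hq ▸ pow_pos (Fact.out (p := p.Prime)).pos e
  have hsub : ∀ u v : R, (u - v) ^ q = u ^ q - v ^ q := by
    subst hq
    exact fun u v => sub_pow_char_pow u v e
  set t0 : (Fin r → Fin q) × (Fin s → Fin q) :=
    (fun _ => ⟨0, hq0⟩, fun _ => ⟨0, hq0⟩) with ht0
  have hv1 : ∀ i, (t0.1 i : ℕ) = 0 := fun _ => rfl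
  have hv2 : ∀ j, (t0.2 j : ℕ) = 0 := fun _ => rfl
  have hMont0 : QExpAux.Mon x y t0 = 1 := by
    show (∏ i, x i ^ (t0.1 i : ℕ)) * ∏ j, y j ^ (t0.2 j : ℕ) = 1
    simp [hv1, hv2]
  have ht0eq : ∀ t : (Fin r → Fin q) × (Fin s → Fin q),
      ((∀ i, (t.1 i : ℕ) = 0) ∧ ∀ j, (t.2 j : ℕ) = 0) ↔ t = t0 := by
    intro t
    constructor
    · rintro ⟨h1, h2⟩
      exact Prod.ext (funext fun i => Fin.ext (h1 i)) (funext fun j => Fin.ext (h2 j))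
    · rintro rfl
      exact ⟨hv1, hv2⟩
  have hfM : f = ∑ t, (c t) ^ q * QExpAux.Mon x y t := hf
  constructor
  · rintro ⟨lam, hlam⟩ t hnz
    have htne : t ≠ t0 := fun h => hnz ((ht0eq t).mpr h)
    set c' : (Fin r → Fin q) × (Fin s → Fin q) → R :=
      fun u => if u = t0 then c t0 - lam else c u with hc'
    have hc't0 : c' t0 = c t0 - lam := by rw [hc']; simp
    have hc'ne : ∀ u, u ≠ t0 → c' u = c u := by
      intro u hu; rw [hc']; simp [hu]
    have hdiff : ∀ u, (c u) ^ q * QExpAux.Mon x y u - (c' u) ^ q * QExpAux.Mon x y u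
        = if u = t0 then lam ^ q else 0 := by
      intro u
      by_cases hu : u = t0
      · subst hu
        rw [hc't0, hMont0, mul_one, mul_one, hsub, if_pos rfl]
        ring
      · rw [hc'ne u hu, sub_self, if_neg hu]
    have hlamq : (∑ u : (Fin r → Fin q) × (Fin s → Fin q), (c u) ^ q * QExpAux.Mon x y u)
        - ∑ u : (Fin r → Fin q) × (Fin s → Fin q), (c' u) ^ q * QExpAux.Mon x y u
        = lam ^ q := by
      rw [← Finset.sum_sub_distrib]
      have h1 : ∑ u : (Fin r → Fin q) × (Fin s → Fin q),
          ((c u) ^ q * QExpAux.Mon x y u - (c' u) ^ q * QExpAux.Mon x y u)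
          = ∑ u : (Fin r → Fin q) × (Fin s → Fin q), if u = t0 then lam ^ q else 0 :=
        Finset.sum_congr rfl fun u _ => hdiff u
      rw [h1]
      simp
    have hsplit : f - lam ^ q =
        ∑ u : (Fin r → Fin q) × (Fin s → Fin q), (c' u) ^ q * QExpAux.Mon x y u := by
      rw [hfM]
      linear_combination hlamq
    obtain ⟨a, hpow, hmem, hsum⟩ :=
      QExpAux.expand_mem_pow p e q hq x y hx hbasis_span n _ hlam
    have hker : ∀ u, (c' u) ^ q - a u = 0 := by
      have hDpow : ∀ u, ∃ w : R, (c' u) ^ q - a u = w ^ q := by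
        intro u
        obtain ⟨v, hv⟩ := hpow u
        exact ⟨c' u - v, by rw [hv, ← hsub]⟩
      have hDzero : (∑ u : (Fin r → Fin q) × (Fin s → Fin q),
          ((c' u) ^ q - a u) * QExpAux.Mon x y u) = 0 := by
        have hd : ∑ u : (Fin r → Fin q) × (Fin s → Fin q),
            ((c' u) ^ q - a u) * QExpAux.Mon x y u
            = (∑ u : (Fin r → Fin q) × (Fin s → Fin q), (c' u) ^ q * QExpAux.Mon x y u)
              - ∑ u : (Fin r → Fin q) × (Fin s → Fin q), a u * QExpAux.Mon x y u := by
          rw [← Finset.sum_sub_distrib]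
          exact Finset.sum_congr rfl fun u _ => sub_mul _ _ _
        rw [hd, ← hsplit, ← hsum, sub_self]
      exact hbasis_ind (fun u => (c' u) ^ q - a u) hDpow hDzero
    have hct : (c t) ^ q = a t := by
      have h := hker t
      rw [hc'ne t htne] at h
      exact sub_eq_zero.mp h
    show (c t) ^ q * QExpAux.Mon x y t ∈ IsLocalRing.maximalIdeal R ^ n
    rw [hct]
    exact hmem t
  · intro H
    refine ⟨c t0, ?_⟩
    have hsplit : f - (c t0) ^ q =
        ∑ u ∈ Finset.univ.erase t0, (c u) ^ q * QExpAux.Mon x y u := by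
      rw [Finset.sum_erase_eq_sub (Finset.mem_univ t0), hMont0, mul_one, ← hfM]
    rw [hsplit]
    refine Ideal.sum_mem _ fun u hu => ?_
    have hune : u ≠ t0 := Finset.ne_of_mem_erase hu
    exact H u fun hz => hune ((ht0eq u).mp hz)
end

section
/- Let R be a commutative ring of characteristic p > 0, q = p^e, and let I_1 ⊆ ⋯ ⊆ I_{q−1} be a chain of ideals of R together with an invertible ideal L ⊆ R generated by a nonzero divisor such that L^j · Diff_R^j(I_i) ⊆ I_{i+j} whenever i ≥ 1, j ≥ 0, i + j ≤ q − 1. Then the collection ((I_1 : L^1), …, (I_{q−1} : L^{q−1})) is q-differential, i.e., Diff_R^j((I_i : L^i)) ⊆ (I_{i+j} : L^{i+j}) whenever i + j ≤ q − 1. -/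
/-- If `I_1 ⊆ ⋯ ⊆ I_{q-1}` is a chain of ideals and `L = (ℓ)` an invertible (principal,
generated by a nonzerodivisor) ideal with `L^j · Diff_R^j(I_i) ⊆ I_{i+j}` whenever
`i ≥ 1`, `j ≥ 0`, `i + j ≤ q - 1`, then `((I_1 : L), …, (I_{q-1} : L^{q-1}))` is a
`q`-differential collection: `Diff_R^j((I_i : L^i)) ⊆ (I_{i+j} : L^{i+j})` for
`i + j ≤ q - 1`  (here `R` has characteristic `p > 0` and `q = p ^ e`). -/
theorem colon_collection_is_q_differential
    (R : Type*) [CommRing R] (p : ℕ) [Fact p.Prime] [CharP R p]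
    (e q : ℕ) (hq : q = p ^ e)
    (I : ℕ → Ideal R) (hchain : ∀ i : ℕ, 1 ≤ i → i + 1 ≤ q - 1 → I i ≤ I (i + 1))
    (ℓ : R) (hℓ : ℓ ∈ nonZeroDivisors R)
    (hhyp : ∀ i j : ℕ, 1 ≤ i → i + j ≤ q - 1 → ∀ f ∈ I i,
      ∀ D : R →+ R, IsDiffOp R j D → ℓ ^ j * D f ∈ I (i + j)) :
    ∀ i j : ℕ, 1 ≤ i → i + j ≤ q - 1 →
      ∀ f ∈ (I i).colon (Ideal.span {ℓ ^ i}),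
        ∀ D : R →+ R, IsDiffOp R j D →
          D f ∈ (I (i + j)).colon (Ideal.span {ℓ ^ (i + j)}) := by
  have key : ∀ j k i : ℕ, 1 ≤ i → i + j ≤ q - 1 → ∀ f : R, ℓ ^ k * f ∈ I i →
      ∀ D : R →+ R, IsDiffOp R j D → ℓ ^ (k + j) * D f ∈ I (i + j) := by
    intro j
    induction j with
    | zero =>
      intro k i hi hij f hf D hD
      have h0 : ∀ r s : R, D (r * s) = r * D s := hD
      have := hhyp i 0 hi (by simpa using hij) (ℓ ^ k * f) hf D hD
      simpa [h0 (ℓ ^ k) f] using this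
    | succ m ihm =>
      intro k
      induction k with
      | zero =>
        intro i hi hij f hf D hD
        simpa using hhyp i (m + 1) hi hij f (by simpa using hf) D hD
      | succ k ihk =>
        intro i hi hij f hf D hD
        set C : R →+ R :=
          (D.comp (AddMonoidHom.mulLeft ℓ)) - ((AddMonoidHom.mulLeft ℓ).comp D) with hCdef
        have hC : IsDiffOp R m C := hD ℓ
        have h1 : ℓ ^ (k + (m + 1)) * D (ℓ * f) ∈ I (i + (m + 1)) :=
          ihk i hi hij (ℓ * f) (by rw [← mul_assoc, ← pow_succ]; exact hf) D hD
        have h2 : ℓ ^ ((k + 1) + m) * C f ∈ I (i + m) :=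
          ihm (k + 1) i hi (by omega) f hf C hC
        have h2' : ℓ ^ ((k + 1) + m) * C f ∈ I (i + (m + 1)) := by
          have h3 := hchain (i + m) (by omega) (by omega) h2
          have : i + m + 1 = i + (m + 1) := by omega
          rwa [this] at h3
        have hCf : C f = D (ℓ * f) - ℓ * D f := by
          simp [hCdef, AddMonoidHom.sub_apply, AddMonoidHom.comp_apply]
        have heq : ℓ ^ ((k + 1) + (m + 1)) * D f
            = ℓ ^ (k + (m + 1)) * D (ℓ * f) - ℓ ^ ((k + 1) + m) * C f := by
          rw [hCf]; ring
        rw [heq]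
        exact Ideal.sub_mem _ h1 h2'
  intro i j hi hij f hf D hD
  have hf' : ℓ ^ i * f ∈ I i := by
    rw [Ideal.mem_colon_span_singleton] at hf
    rwa [mul_comm]
  rw [Ideal.mem_colon_span_singleton, mul_comm]
  exact key j i i hi hij f hf' D hD
end

section
/- Let R be a domain of characteristic p > 0, let P ⊂ R be a prime ideal generated by x_1, …, x_s, and let R_1 = { z / x_1^t ∈ R_{x_1} : z ∈ P^t, t ≥ 0 } be the x_1-chart of the blowup along P. If D : R → R is a P-logarithmic differential operator (D(P^k) ⊆ P^k for all k ≥ 0), then the unique extension of D to R_{x_1} maps R_1 into R_1, and moreover D(x_1^k R_1) ⊆ x_1^k R_1 for all k ≥ 0 (i.e., D is x_1 R_1-logarithmic as a differential operator of R_1). -/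
instance AddMonoid.End.charP (A : Type*) [NonAssocSemiring A] (p : ℕ) [CharP A p] :
    CharP (AddMonoid.End A) p where
  cast_eq_zero_iff n := by
    rw [← CharP.cast_eq_zero_iff A p n]
    refine ⟨fun h => by simpa using DFunLike.congr_fun h 1, fun h => ?_⟩
    ext a
    rw [AddMonoid.End.natCast_apply, nsmul_eq_mul, h, zero_mul, AddMonoid.End.zero_apply]

namespace AddMonoid.End

variable {A : Type*} [Semiring A]

theorem mulLeft_pow (a : A) (n : ℕ) : mulLeft a ^ n = mulLeft (a ^ n) := by
  induction n with
  | zero => rw [pow_zero, pow_zero]; ext b; exact (one_mul b).symm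
  | succ n ih => rw [pow_succ, ih, pow_succ]; ext b; exact (mul_assoc _ _ _).symm

theorem mulRight_pow (a : A) (n : ℕ) : mulRight a ^ n = mulRight (a ^ n) := by
  induction n with
  | zero => rw [pow_zero, pow_zero]; ext b; exact (mul_one b).symm
  | succ n ih => rw [pow_succ', ih, pow_succ]; ext b; exact mul_assoc b _ _

theorem commute_mulLeft_mulRight (a b : A) : Commute (mulLeft a) (mulRight b) :=
  AddMonoidHom.ext fun c => (mul_assoc a c b).symm

end AddMonoid.End

namespace IsDiffOp

open AddMonoid.End

variable {S : Type*} [CommRing S]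

def adMulLeft (f : S) : AddMonoid.End (AddMonoid.End S) :=
  mulRight (mulLeft f) - mulLeft (mulLeft f)

theorem adMulLeft_apply_apply (f : S) (X : S →+ S) (z : S) :
    adMulLeft f X z = X (f * z) - f * X z := rfl

theorem adMulLeft_pow_eq_zero :
    ∀ {d : ℕ} {D : S →+ S}, IsDiffOp S d D → ∀ (f : S) {m : ℕ}, d < m → (adMulLeft f ^ m) D = 0
  | 0, D, h, f, m + 1, _ => by
    have hD : adMulLeft f D = 0 := by
      ext z; rw [adMulLeft_apply_apply, h f z, sub_self]; rfl
    rw [pow_succ]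
    exact (congrArg (adMulLeft f ^ m) hD).trans (map_zero _)
  | _ + 1, _, h, f, m + 1, hm => by
    rw [pow_succ]
    exact adMulLeft_pow_eq_zero (h f) f (by omega)

theorem adMulLeft_pow_char_pow (p : ℕ) [Fact p.Prime] [CharP S p] (f : S) (e : ℕ) :
    adMulLeft f ^ p ^ e = adMulLeft (f ^ p ^ e) := by
  rw [adMulLeft, sub_pow_char_pow_of_commute _ _ (commute_mulLeft_mulRight _ _).symm,
    mulLeft_pow, mulRight_pow, mulLeft_pow, adMulLeft]

theorem map_pow_char_pow_mul (p : ℕ) [Fact p.Prime] [CharP S p] {d : ℕ} {D : S →+ S}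
    (h : IsDiffOp S d D) (f : S) {e : ℕ} (he : d < p ^ e) (z : S) :
    D (f ^ p ^ e * z) = f ^ p ^ e * D z := by
  have hD := DFunLike.congr_fun (adMulLeft_pow_eq_zero h f he) z
  rw [adMulLeft_pow_char_pow, adMulLeft_apply_apply] at hD
  exact sub_eq_zero.mp hD

end IsDiffOp

theorem exists_mul_pow_eq_algebraMap_of_le {R S : Type*} [CommRing R] [CommRing S] [Algebra R S]
    {I : Ideal R} {a : R} (ha : a ∈ I) {k t t' : ℕ} (htt' : t ≤ t') {z : S} {w : R}
    (hw : w ∈ I ^ (k + t)) (hz : z * algebraMap R S a ^ t = algebraMap R S w) :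
    ∃ w' ∈ I ^ (k + t'), z * algebraMap R S a ^ t' = algebraMap R S w' := by
  refine ⟨w * a ^ (t' - t), ?_, ?_⟩
  · rw [show k + t' = (k + t) + (t' - t) by omega, pow_add]
    exact Ideal.mul_mem_mul hw (Ideal.pow_mem_pow ha _)
  · rw [map_mul, map_pow, ← hz, mul_assoc, ← pow_add, Nat.add_sub_cancel' htt']

theorem logarithmic_diffOp_preserves_blowup_chart_general
    (R : Type*) [CommRing R] (p : ℕ) [Fact p.Prime] [CharP R p]
    (s : ℕ) (x : Fin (s + 1) → R)
    (P : Ideal R) (hP : P = Ideal.span (Set.range x))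
    (d : ℕ) (D : R →+ R)
    (hlog : ∀ k : ℕ, ∀ r ∈ P ^ k, D r ∈ P ^ k)
    (D' : Localization.Away (x 0) →+ Localization.Away (x 0))
    (hD' : IsDiffOp (Localization.Away (x 0)) d D')
    (hext : ∀ r : R, D' (algebraMap R (Localization.Away (x 0)) r) =
      algebraMap R (Localization.Away (x 0)) (D r)) :
    ∀ k : ℕ, ∀ z : Localization.Away (x 0),
      (∃ t : ℕ, ∃ w ∈ P ^ (k + t),
        z * (algebraMap R (Localization.Away (x 0)) (x 0)) ^ t =
          algebraMap R (Localization.Away (x 0)) w) →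
      (∃ t : ℕ, ∃ w ∈ P ^ (k + t),
        D' z * (algebraMap R (Localization.Away (x 0)) (x 0)) ^ t =
          algebraMap R (Localization.Away (x 0)) w) := by
  rintro k z ⟨t, w, hw, hzw⟩
  rcases subsingleton_or_nontrivial (Localization.Away (x 0)) with _ | _
  · exact ⟨0, 0, zero_mem _, Subsingleton.elim _ _⟩
  have hp : p.Prime := Fact.out
  have : CharP (Localization.Away (x 0)) p := (CharP.charP_iff_prime_eq_zero hp).2 <| by
    rw [← map_natCast (algebraMap R _), CharP.cast_eq_zero, map_zero]
  have hx : x 0 ∈ P := hP ▸ Ideal.subset_span ⟨0, rfl⟩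
  have hq : d + t < p ^ (d + t) := Nat.lt_pow_self hp.one_lt
  obtain ⟨w', hw', hzw'⟩ :=
    exists_mul_pow_eq_algebraMap_of_le (t' := p ^ (d + t)) hx (by omega) hw hzw
  refine ⟨_, D w', hlog _ _ hw', ?_⟩
  rw [← hext, ← hzw', mul_comm z, hD'.map_pow_char_pow_mul p _ (by omega), mul_comm]

/-- Giraud's lemma for the blowup chart: let `R` be a domain of characteristic `p > 0`,
`P` a prime generated by `x 0, …, x (s-1)`, and let
`R₁ = { z / (x 0)^t : z ∈ P^t }` be the `x 0`-chart of the blowup along `P`, viewed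
inside `Localization.Away (x 0)`.  If `D` is a `P`-logarithmic differential operator of
`R` of order at most `d` and `D'` is a differential operator of the localization of order
at most `d` extending `D`, then `D'` preserves each subset `(x 0)^k R₁`; in particular
(`k = 0`) it maps `R₁` into `R₁`, and it is `x 0 · R₁`-logarithmic. -/
theorem logarithmic_diffOp_preserves_blowup_chart
    (R : Type*) [CommRing R] [IsDomain R] (p : ℕ) [Fact p.Prime] [CharP R p]
    (s : ℕ) (x : Fin (s + 1) → R)
    (P : Ideal R) (hP : P = Ideal.span (Set.range x)) (hPprime : P.IsPrime)
    (d : ℕ) (D : R →+ R) (hD : IsDiffOp R d D)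
    (hlog : ∀ k : ℕ, ∀ r ∈ P ^ k, D r ∈ P ^ k)
    (D' : Localization.Away (x 0) →+ Localization.Away (x 0))
    (hD' : IsDiffOp (Localization.Away (x 0)) d D')
    (hext : ∀ r : R, D' (algebraMap R (Localization.Away (x 0)) r) =
      algebraMap R (Localization.Away (x 0)) (D r)) :
    ∀ k : ℕ, ∀ z : Localization.Away (x 0),
      (∃ t : ℕ, ∃ w ∈ P ^ (k + t),
        z * (algebraMap R (Localization.Away (x 0)) (x 0)) ^ t =
          algebraMap R (Localization.Away (x 0)) w) →
      (∃ t : ℕ, ∃ w ∈ P ^ (k + t),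
        D' z * (algebraMap R (Localization.Away (x 0)) (x 0)) ^ t =
          algebraMap R (Localization.Away (x 0)) w) :=
  logarithmic_diffOp_preserves_blowup_chart_general R p s x P hP d D hlog D' hD' hext
end

section
/- Let (S, n) ⊆ (B, M) be a finite extension of local domains of characteristic p > 0 with S regular and F-finite, and B^q ⊆ S for some q = p^e. Then the following are equivalent: (i) B^q ⊆ S^q + n^q (inside S); (ii) B = S + M and M is the integral closure of the ideal nB in B. -/
/-!
Write `q = p ^ e`. If `b ^ q = σ ^ q + g` with `g ∈ n ^ q`, then `(b - σ) ^ q = g ∈ M`, so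
`b - σ ∈ M`; and for `b ∈ M` also `σ ∈ n`, whence `b ^ q ∈ (nB) ^ q` and `b` is integral
over `nB`. Conversely, write `b = σ + m` with `m ∈ M` integral over `nB`. Raising an equation of
integral dependence to the `q`-th power (Frobenius) shows that `m ^ q ∈ S` is integral over
`n ^ q`, and `n ^ q` is integrally closed because `S` is regular: a regular system of parameters
is quasi-regular, so the `n`-adic order `ord` is additive on products, and an equation
`y ^ k + ∑ cᵢ y ^ (k - i) = 0` with `cᵢ ∈ n ^ (N i)` and `ord y < N` would put `y ^ k` in
`n ^ (k ord y + 1)`.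
-/

open MvPolynomial

section HomogeneousEval

variable {σ R : Type*} [CommSemiring R]

lemma Ideal.prod_pow_mem_pow_sum {I : Ideal R} {x : σ → R} (m : σ →₀ ℕ)
    (hx : ∀ j ∈ m.support, x j ∈ I) :
    ∏ j ∈ m.support, x j ^ m j ∈ I ^ ∑ j ∈ m.support, m j := by
  rw [← Finset.prod_pow_eq_pow_sum]
  exact Ideal.prod_mem_prod fun j hj => Ideal.pow_mem_pow (hx j hj) _

lemma MvPolynomial.IsHomogeneous.eval_mem_mul_pow {F : MvPolynomial σ R} {n : ℕ}
    (hF : F.IsHomogeneous n) {I K : Ideal R} {x : σ → R} (hx : ∀ j ∈ F.vars, x j ∈ I)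
    (hK : ∀ m, coeff m F ∈ K) : eval x F ∈ K * I ^ n := by
  rw [eval_eq]
  refine Ideal.sum_mem _ fun m hm => Ideal.mul_mem_mul (hK m) ?_
  rw [hF.degree_eq_sum_deg_support hm]
  exact Ideal.prod_pow_mem_pow_sum m fun j hj =>
    hx j ((mem_vars_iff_mem_support j).2 ⟨m, hm, hj⟩)

lemma MvPolynomial.IsHomogeneous.eval_mem_pow {F : MvPolynomial σ R} {n : ℕ}
    (hF : F.IsHomogeneous n) {I : Ideal R} {x : σ → R} (hx : ∀ j ∈ F.vars, x j ∈ I) :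
    eval x F ∈ I ^ n := by
  simpa using hF.eval_mem_mul_pow (K := ⊤) hx fun _ => Submodule.mem_top

lemma MvPolynomial.mem_supported_iff_coeff {s : Set σ} {F : MvPolynomial σ R} :
    F ∈ supported R s ↔ ∀ m, coeff m F ≠ 0 → ∀ j ∈ m.support, j ∈ s := by
  simp only [mem_supported, Set.subset_def, Finset.mem_coe, mem_vars_iff_mem_support,
    mem_support_iff]
  grind

lemma MvPolynomial.IsHomogeneous.exists_eq_X_mul_add {s : Set σ} {n : ℕ} {H : MvPolynomial σ R}
    (hH : H.IsHomogeneous (n + 1)) (hHs : H ∈ supported R s) (i : σ) :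
    ∃ A Q : MvPolynomial σ R, A.IsHomogeneous n ∧ A ∈ supported R s ∧
      Q.IsHomogeneous (n + 1) ∧ Q ∈ supported R (s \ {i}) ∧ H = X i * A + Q := by
  classical
  set A := divMonomial H (Finsupp.single i 1)
  set Q := modMonomial H (Finsupp.single i 1)
  have hA : ∀ m, coeff m A = coeff (Finsupp.single i 1 + m) H := coeff_divMonomial _ _
  have hQ : ∀ m, coeff m Q ≠ 0 → m i = 0 ∧ coeff m Q = coeff m H := by
    intro m hm
    by_cases hle : Finsupp.single i 1 ≤ m
    · exact absurd (coeff_modMonomial_of_le H hle) hm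
    · refine ⟨by simpa [Finsupp.single_le_iff] using hle, coeff_modMonomial_of_not_le H hle⟩
  rw [mem_supported_iff_coeff] at hHs
  refine ⟨A, Q, fun m hm => ?_, mem_supported_iff_coeff.2 fun m hm j hj => ?_, fun m hm => ?_,
    mem_supported_iff_coeff.2 fun m hm j hj => ?_, (divMonomial_add_modMonomial_single H i).symm⟩
  · have := hH (hA m ▸ hm)
    simp only [map_add, Finsupp.weight_single, Pi.one_apply, smul_eq_mul, mul_one] at this
    omega
  · rw [hA] at hm
    exact hHs _ hm j (by simp_all)
  · exact hH ((hQ m hm).2 ▸ hm)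
  · obtain ⟨hmi, hmH⟩ := hQ m hm
    refine ⟨hHs m (hmH ▸ hm) j hj, fun hji => ?_⟩
    rw [Set.mem_singleton_iff.1 hji, Finsupp.mem_support_iff] at hj
    exact hj hmi

end HomogeneousEval

section PrefixIdeal

variable {R : Type*} [CommRing R] (x : ℕ → R)

def prefixIdeal (c : ℕ) : Ideal R := Ideal.span (x '' Set.Iio c)

variable {x}

lemma mem_prefixIdeal {c j : ℕ} (hj : j < c) : x j ∈ prefixIdeal x c :=
  Ideal.subset_span ⟨j, hj, rfl⟩

lemma prefixIdeal_mono {c c' : ℕ} (h : c ≤ c') : prefixIdeal x c ≤ prefixIdeal x c' :=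
  Ideal.span_mono (Set.image_mono fun _ hj => lt_of_lt_of_le hj h)

lemma mem_prefixIdeal_pow_iff {c n : ℕ} {y : R} :
    y ∈ prefixIdeal x c ^ n ↔
      ∃ F : MvPolynomial ℕ R, F.IsHomogeneous n ∧ F ∈ supported R (Set.Iio c) ∧
        eval x F = y := by
  constructor
  · intro hy
    rw [prefixIdeal, Set.image_eq_range, Ideal.mem_span_pow_iff_exists_isHomogeneous] at hy
    obtain ⟨p, hp, rfl⟩ := hy
    refine ⟨rename Subtype.val p, hp.rename_isHomogeneous, ?_, eval_rename _ _ _⟩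
    rw [supported_eq_range_rename]
    exact ⟨p, rfl⟩
  · rintro ⟨F, hF, hFs, rfl⟩
    exact hF.eval_mem_pow fun j hj => mem_prefixIdeal ((mem_supported.1 hFs) hj)

lemma exists_coeff_mem_of_mem_prefixIdeal_pow_succ {c n : ℕ} {y : R}
    (hy : y ∈ prefixIdeal x c ^ (n + 1)) :
    ∃ G : MvPolynomial ℕ R, G.IsHomogeneous n ∧ G ∈ supported R (Set.Iio c) ∧
      (∀ m, coeff m G ∈ prefixIdeal x c) ∧ eval x G = y := by
  rw [pow_succ] at hy
  refine Submodule.mul_induction_on hy ?_ ?_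
  · intro b hb a ha
    obtain ⟨F, hF, hFs, rfl⟩ := mem_prefixIdeal_pow_iff.1 hb
    refine ⟨C a * F, hF.C_mul a, Subalgebra.mul_mem _ (Subalgebra.algebraMap_mem _ a) hFs,
      fun m => ?_, by simp [mul_comm]⟩
    rw [coeff_C_mul]
    exact Ideal.mul_mem_right _ _ ha
  · rintro _ _ ⟨G₁, h₁, s₁, c₁, rfl⟩ ⟨G₂, h₂, s₂, c₂, rfl⟩
    refine ⟨G₁ + G₂, h₁.add h₂, add_mem s₁ s₂, fun m => ?_, eval_add⟩
    rw [coeff_add]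
    exact add_mem (c₁ m) (c₂ m)

variable (x) in
def IsRegularUpTo (c : ℕ) : Prop :=
  ∀ i < c, ∀ u, x i * u ∈ prefixIdeal x i → u ∈ prefixIdeal x i

lemma IsRegularUpTo.mono {c c' : ℕ} (h : IsRegularUpTo x c') (hc : c ≤ c') :
    IsRegularUpTo x c :=
  fun i hi => h i (lt_of_lt_of_le hi hc)

variable (x) in
/-- Quasi-regularity of `x 0, …, x (c - 1)` in degree `n`, in the sense of Matsumura, §16. -/
def IsQuasiRegularInDegree (c n : ℕ) : Prop :=
  ∀ F : MvPolynomial ℕ R, F.IsHomogeneous n → F ∈ supported R (Set.Iio c) →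
    eval x F = 0 → ∀ m, coeff m F ∈ prefixIdeal x c

lemma IsQuasiRegularInDegree.coeff_mem {c n : ℕ} (h : IsQuasiRegularInDegree x c n)
    {F : MvPolynomial ℕ R} (hF : F.IsHomogeneous n) (hFs : F ∈ supported R (Set.Iio c))
    (he : eval x F ∈ prefixIdeal x c ^ (n + 1)) (m : ℕ →₀ ℕ) :
    coeff m F ∈ prefixIdeal x c := by
  obtain ⟨G, hG, hGs, hGc, hGe⟩ := exists_coeff_mem_of_mem_prefixIdeal_pow_succ he
  have hFG := h (F - G) (hF.sub hG) (sub_mem hFs hGs) (by rw [eval_sub, hGe, sub_self]) m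
  rw [coeff_sub] at hFG
  simpa using add_mem hFG (hGc m)

lemma isQuasiRegularInDegree_zero_left (n : ℕ) : IsQuasiRegularInDegree x 0 n := by
  intro F _ hFs he m
  rw [show Set.Iio 0 = (∅ : Set ℕ) by simp, supported_empty, Algebra.mem_bot] at hFs
  obtain ⟨r, rfl⟩ := hFs
  simp_all

lemma isQuasiRegularInDegree_zero_right (c : ℕ) : IsQuasiRegularInDegree x c 0 := by
  intro F hF _ he m
  rw [← totalDegree_zero_iff_isHomogeneous, totalDegree_eq_zero_iff_eq_C] at hF
  rw [hF, eval_C] at he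
  rw [hF, he, C_0, coeff_zero]
  exact zero_mem _

lemma eval_mem_prefixIdeal_pow_succ {c n : ℕ} {F : MvPolynomial ℕ R} (hF : F.IsHomogeneous n)
    (hFs : F ∈ supported R (Set.Iio c)) (hc : ∀ m, coeff m F ∈ prefixIdeal x c) :
    eval x F ∈ prefixIdeal x c ^ (n + 1) := by
  rw [pow_succ']
  exact hF.eval_mem_mul_pow (fun j hj => mem_prefixIdeal (mem_supported.1 hFs hj)) hc

lemma mem_pow_of_mul_mem_pow {c : ℕ}
    (hreg : ∀ u, x c * u ∈ prefixIdeal x c → u ∈ prefixIdeal x c)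
    (hqr : ∀ n, IsQuasiRegularInDegree x c n) (d : ℕ) {u : R}
    (hu : x c * u ∈ prefixIdeal x c ^ d) : u ∈ prefixIdeal x c ^ d := by
  induction d generalizing u with
  | zero => simp
  | succ d ih =>
    obtain ⟨U, hU, hUs, rfl⟩ :=
      mem_prefixIdeal_pow_iff.1 (ih (Ideal.pow_le_pow_right d.le_succ hu))
    have hcoeff : ∀ m, coeff m U ∈ prefixIdeal x c := fun m => by
      refine hreg _ ?_
      rw [← coeff_C_mul]
      exact (hqr d).coeff_mem (hU.C_mul _)
        (Subalgebra.mul_mem _ (Subalgebra.algebraMap_mem _ _) hUs) (by rwa [eval_mul, eval_C]) m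
    exact eval_mem_prefixIdeal_pow_succ hU hUs hcoeff

lemma IsQuasiRegularInDegree.succ {c s : ℕ} (hreg : IsRegularUpTo x (c + 1))
    (hc : ∀ n, IsQuasiRegularInDegree x c n) (hs : IsQuasiRegularInDegree x (c + 1) s) :
    IsQuasiRegularInDegree x (c + 1) (s + 1) := by
  classical
  intro H hH hHs he
  obtain ⟨A, Q, hA, hAs, hQ, hQs, rfl⟩ := hH.exists_eq_X_mul_add hHs c
  replace hQs : Q ∈ supported R (Set.Iio c) :=
    supported_mono (fun j (hj : j ∈ Set.Iio (c + 1) \ {c}) =>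
      lt_of_le_of_ne (Nat.lt_succ_iff.1 hj.1) hj.2) hQs
  have heval : x c * eval x A + eval x Q = 0 := by simpa using he
  have hQmem : eval x Q ∈ prefixIdeal x c ^ (s + 1) :=
    mem_prefixIdeal_pow_iff.2 ⟨Q, hQ, hQs, rfl⟩
  have hAmem : eval x A ∈ prefixIdeal x c ^ (s + 1) :=
    mem_pow_of_mul_mem_pow (hreg c c.lt_succ_self) hc _
      (by rw [eq_neg_of_add_eq_zero_left heval]; exact neg_mem hQmem)
  have hAcoeff : ∀ m, coeff m A ∈ prefixIdeal x (c + 1) :=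
    hs.coeff_mem hA hAs (Ideal.pow_right_mono (prefixIdeal_mono c.le_succ) _ hAmem)
  -- `A(x) = T(x)` with `T` free of `X c`, so `Q + x c • T` is a relation of degree `s + 1`.
  obtain ⟨T, hT, hTs, hTe⟩ := mem_prefixIdeal_pow_iff.1 hAmem
  have hQT := hc (s + 1) (Q + C (x c) * T) (hQ.add (hT.C_mul _))
    (add_mem hQs (Subalgebra.mul_mem _ (Subalgebra.algebraMap_mem _ _) hTs))
    (by rw [eval_add, eval_mul, eval_C, hTe, add_comm, heval])
  have hQcoeff : ∀ m, coeff m Q ∈ prefixIdeal x (c + 1) := fun m => by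
    have hm := hQT m
    rw [coeff_add, coeff_C_mul] at hm
    rw [← add_sub_cancel_right (coeff m Q) (x c * coeff m T)]
    exact sub_mem (prefixIdeal_mono c.le_succ hm)
      (Ideal.mul_mem_right _ _ (mem_prefixIdeal c.lt_succ_self))
  intro m
  rw [coeff_add, coeff_X_mul']
  split_ifs
  · exact add_mem (hAcoeff _) (hQcoeff m)
  · simpa using hQcoeff m

theorem isQuasiRegularInDegree {c : ℕ} (hreg : IsRegularUpTo x c) (n : ℕ) :
    IsQuasiRegularInDegree x c n := by
  induction c generalizing n with
  | zero => exact isQuasiRegularInDegree_zero_left n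
  | succ c ihc =>
    induction n with
    | zero => exact isQuasiRegularInDegree_zero_right _
    | succ s ihs => exact ihs.succ hreg (ihc (hreg.mono c.le_succ))

end PrefixIdeal

section Order

variable {R : Type*} [CommRing R]

/-- The `I`-adic order is additive on products, i.e. `gr_I R` has no zero divisors. -/
def Ideal.HasMultiplicativeOrder (I : Ideal R) : Prop :=
  ∀ ⦃y z : R⦄ ⦃s t : ℕ⦄, y ∈ I ^ s → y ∉ I ^ (s + 1) → z ∈ I ^ t →
    z ∉ I ^ (t + 1) → y * z ∉ I ^ (s + t + 1)

def IsIntegralOverIdeal (I : Ideal R) (b : R) : Prop :=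
  ∃ m : ℕ, 0 < m ∧ ∃ a : ℕ → R, (∀ i, 1 ≤ i → i ≤ m → a i ∈ I ^ i) ∧
    b ^ m + ∑ i ∈ Finset.Icc 1 m, a i * b ^ (m - i) = 0

variable {I : Ideal R}

lemma Ideal.HasMultiplicativeOrder.pow_notMem (hI : I.HasMultiplicativeOrder) (hI' : I ≠ ⊤)
    {y : R} {s : ℕ} (hy : y ∈ I ^ s) (hy' : y ∉ I ^ (s + 1)) (k : ℕ) :
    y ^ k ∉ I ^ (k * s + 1) := by
  induction k with
  | zero => simpa [← Ideal.eq_top_iff_one] using hI'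
  | succ k ih =>
    rw [pow_succ y k, Nat.succ_mul]
    have hyk : y ^ k ∈ I ^ (k * s) := by
      rw [mul_comm, pow_mul]
      exact Ideal.pow_mem_pow hy k
    exact hI hyk ih hy hy'

lemma exists_mem_pow_notMem_pow_succ_of_iInf_pow_eq_bot (hI : ⨅ i : ℕ, I ^ i = ⊥) {y : R}
    (hy : y ≠ 0) : ∃ t, y ∈ I ^ t ∧ y ∉ I ^ (t + 1) := by
  classical
  have hex : ∃ i, y ∉ I ^ i := by
    by_contra! h
    exact hy (by simpa [hI] using Submodule.mem_iInf _ |>.2 h)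
  have hpos : Nat.find hex ≠ 0 := fun h0 => Nat.find_spec hex (by simp [h0])
  refine ⟨Nat.find hex - 1, not_not.1 (Nat.find_min hex (by omega)), ?_⟩
  rw [Nat.sub_add_cancel (Nat.pos_of_ne_zero hpos)]
  exact Nat.find_spec hex

lemma Ideal.HasMultiplicativeOrder.mem_pow_of_isIntegralOverIdeal (hI : I.HasMultiplicativeOrder)
    (hI' : I ≠ ⊤) (hKrull : ⨅ i : ℕ, I ^ i = ⊥) {N : ℕ} {y : R}
    (hy : IsIntegralOverIdeal (I ^ N) y) : y ∈ I ^ N := by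
  obtain ⟨k, hk, c, hc, heq⟩ := hy
  rcases eq_or_ne y 0 with rfl | hy0
  · exact zero_mem _
  obtain ⟨t, hyt, hyt'⟩ := exists_mem_pow_notMem_pow_succ_of_iInf_pow_eq_bot hKrull hy0
  by_contra hyN
  have htN : t < N := by
    by_contra! h
    exact hyN (Ideal.pow_le_pow_right h hyt)
  -- Each term `c i * y ^ (k - i)` has order at least `N i + t (k - i) > k t`.
  refine hI.pow_notMem hI' hyt hyt' k ?_
  rw [eq_neg_of_add_eq_zero_left heq]
  refine neg_mem (Ideal.sum_mem _ fun i hi => ?_)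
  obtain ⟨hi1, hik⟩ := Finset.mem_Icc.1 hi
  have hterm : c i * y ^ (k - i) ∈ I ^ (N * i + t * (k - i)) := by
    rw [pow_add, pow_mul, pow_mul]
    exact Ideal.mul_mem_mul (hc i hi1 hik) (Ideal.pow_mem_pow hyt _)
  refine Ideal.pow_le_pow_right ?_ hterm
  nlinarith [Nat.sub_add_cancel hik]

lemma isIntegralOverIdeal_of_pow_mem {b : R} {m : ℕ} (hm : 0 < m) (h : b ^ m ∈ I ^ m) :
    IsIntegralOverIdeal I b := by
  classical
  refine ⟨m, hm, fun i => if i = m then -b ^ m else 0, fun i _ _ => ?_, ?_⟩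
  · dsimp only
    split_ifs with him
    · subst him
      exact neg_mem h
    · exact zero_mem _
  · simp [Finset.sum_ite_eq', Nat.one_le_iff_ne_zero.2 hm.ne']

lemma IsIntegralOverIdeal.mem_of_le {b : R} {P : Ideal R} [P.IsPrime]
    (hb : IsIntegralOverIdeal I b) (hIP : I ≤ P) : b ∈ P := by
  obtain ⟨m, hm, a, ha, heq⟩ := hb
  refine Ideal.IsPrime.mem_of_pow_mem ‹_› m ?_
  rw [eq_neg_of_add_eq_zero_left heq]
  refine neg_mem (Ideal.sum_mem _ fun i hi => Ideal.mul_mem_right _ _ (hIP ?_))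
  obtain ⟨hi1, him⟩ := Finset.mem_Icc.1 hi
  exact Ideal.pow_le_self (by omega) (ha i hi1 him)

end Order

section RegularSequence

variable {R : Type*} [CommRing R]

lemma MvPolynomial.map_mk_eq_zero_iff {I : Ideal R} {F : MvPolynomial ℕ R} :
    map (Ideal.Quotient.mk I) F = 0 ↔ ∀ m, coeff m F ∈ I := by
  simp [MvPolynomial.ext_iff, coeff_map, Ideal.Quotient.eq_zero_iff_mem]

theorem hasMultiplicativeOrder_prefixIdeal {x : ℕ → R} {c : ℕ} (hreg : IsRegularUpTo x c)
    [(prefixIdeal x c).IsPrime] : (prefixIdeal x c).HasMultiplicativeOrder := by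
  intro y z s t hy hy' hz hz' hyz
  obtain ⟨F, hF, hFs, rfl⟩ := mem_prefixIdeal_pow_iff.1 hy
  obtain ⟨G, hG, hGs, rfl⟩ := mem_prefixIdeal_pow_iff.1 hz
  have hFG : map (Ideal.Quotient.mk (prefixIdeal x c)) (F * G) = 0 :=
    map_mk_eq_zero_iff.2 <| (isQuasiRegularInDegree hreg _).coeff_mem (hF.mul hG)
      (mul_mem hFs hGs) (by rwa [eval_mul])
  rw [map_mul, mul_eq_zero, map_mk_eq_zero_iff, map_mk_eq_zero_iff] at hFG
  rcases hFG with h | h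
  · exact hy' (eval_mem_prefixIdeal_pow_succ hF hFs h)
  · exact hz' (eval_mem_prefixIdeal_pow_succ hG hGs h)

lemma prefixIdeal_getD {rs : List R} {i : ℕ} (hi : i ≤ rs.length) :
    prefixIdeal (fun j => rs.getD j 0) i = Ideal.ofList (rs.take i) := by
  rw [prefixIdeal, Ideal.ofList]
  congr 1
  ext r
  simp only [Set.mem_image, Set.mem_Iio, Set.mem_ofPred_eq, List.mem_iff_getElem,
    List.length_take, List.getD_eq_getElem?_getD, List.getElem_take]
  constructor
  · rintro ⟨j, hj, rfl⟩
    exact ⟨j, by omega, by simp [List.getElem?_eq_getElem (show j < rs.length by omega)]⟩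
  · rintro ⟨j, hj, rfl⟩
    exact ⟨j, by omega, by simp [List.getElem?_eq_getElem (show j < rs.length by omega)]⟩

lemma isRegularUpTo_getD {rs : List R} (h : RingTheory.Sequence.IsWeaklyRegular R rs) :
    IsRegularUpTo (fun j => rs.getD j 0) rs.length := by
  intro i hi u hu
  rw [prefixIdeal_getD hi.le] at hu ⊢
  have := h.regular_mod_prev i hi
  rw [smul_eq_mul, Ideal.mul_top] at this
  change rs.getD i 0 * u ∈ _ at hu
  rw [List.getD_eq_getElem _ _ hi] at hu
  exact mem_of_isSMulRegular_quotient_of_smul_mem this hu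

end RegularSequence

open IsLocalRing in
theorem IsLocalRing.mem_maximalIdeal_pow_of_isIntegralOverIdeal {R : Type*} [CommRing R]
    [IsLocalRing R] [IsNoetherianRing R] {rs : List R}
    (hrs : RingTheory.Sequence.IsWeaklyRegular R rs) (hspan : Ideal.ofList rs = maximalIdeal R)
    {N : ℕ} {y : R} (hy : IsIntegralOverIdeal (maximalIdeal R ^ N) y) :
    y ∈ maximalIdeal R ^ N := by
  have hJ : prefixIdeal (fun j => rs.getD j 0) rs.length = maximalIdeal R := by
    rw [prefixIdeal_getD le_rfl, List.take_length, hspan]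
  have : (prefixIdeal (fun j => rs.getD j 0) rs.length).IsPrime :=
    hJ ▸ (maximalIdeal.isMaximal R).isPrime
  have hord := hasMultiplicativeOrder_prefixIdeal (isRegularUpTo_getD hrs)
  rw [hJ] at hord
  exact hord.mem_pow_of_isIntegralOverIdeal (maximalIdeal.isMaximal R).ne_top
    (Ideal.iInf_pow_eq_bot_of_isLocalRing _ (maximalIdeal.isMaximal R).ne_top) hy

section Frobenius

variable {B : Type*} [CommRing B] {p : ℕ} [Fact p.Prime] [CharP B p] {e : ℕ} {S : Subring B}

lemma pow_mem_pow_of_mem_map (hBq : ∀ b : B, b ^ p ^ e ∈ S) {I : Ideal S} {z : B}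
    (hz : z ∈ I.map S.subtype) :
    (⟨z ^ p ^ e, hBq z⟩ : S) ∈ I ^ p ^ e := by
  induction hz using Submodule.span_induction with
  | mem _ h =>
    obtain ⟨s, hs, rfl⟩ := h
    exact Ideal.pow_mem_pow hs _
  | zero =>
    convert zero_mem (I ^ p ^ e) using 1
    ext
    simp [zero_pow (pow_ne_zero e (Fact.out : p.Prime).ne_zero)]
  | add u v _ _ hu hv =>
    convert add_mem hu hv using 1
    ext
    simp [add_pow_char_pow]
  | smul r v _ hv =>
    convert Ideal.mul_mem_left _ ⟨r ^ p ^ e, hBq r⟩ hv using 1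
    ext
    simp [mul_pow]

lemma IsIntegralOverIdeal.pow_char_pow (hBq : ∀ b : B, b ^ p ^ e ∈ S) {I : Ideal S} {b : B}
    (hb : IsIntegralOverIdeal (I.map S.subtype) b) :
    IsIntegralOverIdeal (I ^ p ^ e) ⟨b ^ p ^ e, hBq b⟩ := by
  obtain ⟨k, hk, a, ha, heq⟩ := hb
  refine ⟨k, hk, fun i => ⟨a i ^ p ^ e, hBq _⟩, fun i hi1 hik => ?_, ?_⟩
  · rw [← pow_mul, mul_comm, pow_mul]
    exact pow_mem_pow_of_mem_map hBq (Ideal.map_pow S.subtype I i ▸ ha i hi1 hik)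
  · ext
    have := congrArg (· ^ p ^ e) heq
    simp only [add_pow_char_pow, sum_pow_char_pow, mul_pow, ← pow_mul] at this
    simpa [← pow_mul, mul_comm, zero_pow (pow_ne_zero e (Fact.out : p.Prime).ne_zero)] using this

end Frobenius

lemma isIntegralOverIdeal_map_of_pow_eq_add {B : Type*} [CommRing B] {S : Subring B}
    {P : Ideal B} {I : Ideal S} [I.IsPrime] (hPI : P.comap S.subtype = I) {q : ℕ} (hq : q ≠ 0)
    {b : B} (hb : b ∈ P) {σ g : S} (hg : g ∈ I ^ q) (hbq : b ^ q = σ ^ q + g) :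
    IsIntegralOverIdeal (I.map S.subtype) b := by
  have hσ : σ ∈ I := by
    refine Ideal.IsPrime.mem_of_pow_mem ‹_› q (hPI ▸ ?_)
    rw [Ideal.mem_comap, Subring.subtype_apply, SubmonoidClass.coe_pow, eq_sub_of_add_eq hbq.symm]
    exact sub_mem (Ideal.pow_le_self hq (Ideal.pow_mem_pow hb _))
      (Ideal.mem_comap.1 (hPI ▸ Ideal.pow_le_self hq hg))
  refine isIntegralOverIdeal_of_pow_mem (Nat.pos_of_ne_zero hq) ?_
  rw [hbq]
  exact add_mem (Ideal.pow_mem_pow (Ideal.mem_map_of_mem _ hσ) _)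
    (Ideal.map_pow S.subtype _ _ ▸ Ideal.mem_map_of_mem _ hg)

theorem multiplicity_d_characterization_general
    (B : Type*) [CommRing B] [IsLocalRing B]
    (p : ℕ) [Fact p.Prime] [CharP B p] (e q : ℕ) (hq : q = p ^ e)
    (S : Subring B) [IsLocalRing ↥S]
    (hSreg : IsNoetherianRing ↥S ∧ ∃ rs : List ↥S,
      RingTheory.Sequence.IsRegular (↥S) rs ∧
      Ideal.span {x | x ∈ rs} = IsLocalRing.maximalIdeal ↥S)
    (hloc : ∀ x : ↥S, (x : B) ∈ IsLocalRing.maximalIdeal B ↔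
      x ∈ IsLocalRing.maximalIdeal ↥S)
    (hBq : ∀ b : B, b ^ q ∈ S) :
    ((∀ b : B, ∃ σ : ↥S, ∃ g : ↥S, g ∈ IsLocalRing.maximalIdeal ↥S ^ q ∧
        b ^ q = (σ : B) ^ q + (g : B)) ↔
      ((∀ b : B, ∃ σ : ↥S, b - (σ : B) ∈ IsLocalRing.maximalIdeal B) ∧
        (∀ b : B, b ∈ IsLocalRing.maximalIdeal B ↔
          ∃ m : ℕ, 0 < m ∧ ∃ a : ℕ → B,
            (∀ i, 1 ≤ i → i ≤ m →
              a i ∈ (Ideal.map S.subtype (IsLocalRing.maximalIdeal ↥S)) ^ i) ∧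
            b ^ m + ∑ i ∈ Finset.Icc 1 m, a i * b ^ (m - i) = 0))) := by
  subst hq
  have hpe : p ^ e ≠ 0 := pow_ne_zero e (Fact.out : p.Prime).ne_zero
  have hcomap : (IsLocalRing.maximalIdeal B).comap S.subtype = IsLocalRing.maximalIdeal S :=
    Ideal.ext hloc
  constructor
  · intro hi
    refine ⟨fun b => ?_, fun b => ⟨fun hb => ?_, fun hb => ?_⟩⟩
    · obtain ⟨σ, g, hg, hbq⟩ := hi b
      refine ⟨σ, (IsLocalRing.maximalIdeal.isMaximal B).isPrime.mem_of_pow_mem (p ^ e) ?_⟩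
      rw [sub_pow_char_pow, hbq, add_sub_cancel_left]
      exact (hloc g).2 (Ideal.pow_le_self hpe hg)
    · obtain ⟨σ, g, hg, hbq⟩ := hi b
      exact isIntegralOverIdeal_map_of_pow_eq_add hcomap hpe hb hg hbq
    · exact IsIntegralOverIdeal.mem_of_le hb (Ideal.map_le_iff_le_comap.2 hcomap.ge)
  · rintro ⟨hSM, hMint⟩ b
    obtain ⟨σ, hbσ⟩ := hSM b
    obtain ⟨hnoeth, rs, hrs, hspan⟩ := hSreg
    refine ⟨σ, _, IsLocalRing.mem_maximalIdeal_pow_of_isIntegralOverIdeal hrs.toIsWeaklyRegular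
      hspan (IsIntegralOverIdeal.pow_char_pow hBq ((hMint _).1 hbσ)), ?_⟩
    rw [← add_pow_char_pow, add_sub_cancel]

/-- Let `(S, n) ⊆ (B, M)` be a finite extension of local domains of characteristic
`p > 0`, with `S` regular and `F`-finite and `B ^ q ⊆ S` for `q = p ^ e`.  Then the
following are equivalent:
(i) `B ^ q ⊆ S ^ q + n ^ q` (inside `S`);
(ii) `B = S + M` and `M` is the integral closure of the ideal `n B` in `B`. -/
theorem multiplicity_d_characterization
    (B : Type*) [CommRing B] [IsDomain B] [IsLocalRing B]
    (p : ℕ) [Fact p.Prime] [CharP B p] (e q : ℕ) (hq : q = p ^ e)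
    (S : Subring B) [IsLocalRing ↥S]
    (hSreg : IsNoetherianRing ↥S ∧ ∃ rs : List ↥S,
      RingTheory.Sequence.IsRegular (↥S) rs ∧
      Ideal.span {x | x ∈ rs} = IsLocalRing.maximalIdeal ↥S)
    (hFfin : Module.Finite (↥(frobenius (↥S) p).range) ↥S)
    (hfin : Module.Finite ↥S B)
    (hloc : ∀ x : ↥S, (x : B) ∈ IsLocalRing.maximalIdeal B ↔
      x ∈ IsLocalRing.maximalIdeal ↥S)
    (hBq : ∀ b : B, b ^ q ∈ S) :
    ((∀ b : B, ∃ σ : ↥S, ∃ g : ↥S, g ∈ IsLocalRing.maximalIdeal ↥S ^ q ∧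
        b ^ q = (σ : B) ^ q + (g : B)) ↔
      ((∀ b : B, ∃ σ : ↥S, b - (σ : B) ∈ IsLocalRing.maximalIdeal B) ∧
        (∀ b : B, b ∈ IsLocalRing.maximalIdeal B ↔
          ∃ m : ℕ, 0 < m ∧ ∃ a : ℕ → B,
            (∀ i, 1 ≤ i → i ≤ m →
              a i ∈ (Ideal.map S.subtype (IsLocalRing.maximalIdeal ↥S)) ^ i) ∧
            b ^ m + ∑ i ∈ Finset.Icc 1 m, a i * b ^ (m - i) = 0))) :=
  multiplicity_d_characterization_general B p e q hq S hSreg hloc hBq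
end
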